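/- arXiv:2203.09079 — 8 statements merged into one kernel-verified Lean document; each statement's English description precedes it below -/
import Mathlib

section
/- Let a₁ > a₂ > 0, γ ∈ (0,1/2], and α > γ(a₁ - a₂)/(2a₁a₂). Then the 2×2 matrix M = [[1-γ-2αa₁, γ],[γ, 1-γ+2αa₂]] has an eigenvalue strictly greater than 1; in particular, its largest eigenvalue (1-γ) + (a₂-a₁)α + √((a₁+a₂)²α² + γ²) exceeds 1. -/
theorem eigenvalue_gt_one
    (a₁ a₂ γ α : ℝ) (ha₂ : 0 < a₂) (ha : a₂ < a₁)
    (hγ : γ ∈ Set.Ioc 0 (1/2 : ℝ))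
    (hα : γ * (a₁ - a₂) / (2 * a₁ * a₂) < α) :
    let M : Matrix (Fin 2) (Fin 2) ℝ :=
      Matrix.of ![![1 - γ - 2 * α * a₁, γ], ![γ, 1 - γ + 2 * α * a₂]]
    let lam : ℝ := (1 - γ) + (a₂ - a₁) * α + Real.sqrt ((a₁ + a₂)^2 * α^2 + γ^2)
    1 < lam ∧ ∃ v : Fin 2 → ℝ, v ≠ 0 ∧ M.mulVec v = lam • v := by
  intro M lam
  have hγ0 : 0 < γ := hγ.1
  have ha₁ : 0 < a₁ := ha₂.trans ha
  have hα0 : 0 < α := lt_of_le_of_lt (div_nonneg (by nlinarith) (by positivity)) hα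
  have hkey : γ * (a₁ - a₂) < α * (2 * a₁ * a₂) := (div_lt_iff₀ (by positivity)).mp hα
  have hS : (0:ℝ) ≤ (a₁ + a₂)^2 * α^2 + γ^2 := by positivity
  obtain ⟨s, hs0, hsdef⟩ : ∃ s, 0 ≤ s ∧ Real.sqrt ((a₁ + a₂)^2 * α^2 + γ^2) = s :=
    ⟨_, Real.sqrt_nonneg _, rfl⟩
  have hs2 : s ^ 2 = (a₁ + a₂)^2 * α^2 + γ^2 := by rw [← hsdef]; exact Real.sq_sqrt hS
  have h1 : γ + (a₁ - a₂) * α < s := by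
    nlinarith [hs2, hs0, hkey, mul_pos hα0 (sub_pos.mpr ha)]
  constructor
  · show (1:ℝ) < (1 - γ) + (a₂ - a₁) * α + Real.sqrt ((a₁ + a₂)^2 * α^2 + γ^2)
    rw [hsdef]; linarith
  · refine ⟨![γ, (a₁ + a₂) * α + s], ?_, ?_⟩
    · intro h
      have := congrFun h 0
      simp at this
      exact hγ0.ne' this
    · show M.mulVec _ =
        ((1 - γ) + (a₂ - a₁) * α + Real.sqrt ((a₁ + a₂)^2 * α^2 + γ^2)) • _
      rw [hsdef]
      funext i
      fin_cases i
      · simp [M, Matrix.mulVec, dotProduct, Fin.sum_univ_two, Matrix.of_apply]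
        ring
      · simp [M, Matrix.mulVec, dotProduct, Fin.sum_univ_two, Matrix.of_apply]
        linear_combination -hs2
end

section
/- Let f : ℝ^d → ℝ be μ-strongly convex and L-smooth with minimizer x*, and let 0 < α ≤ 2/(μ+L). Then for every x ∈ ℝ^d, ‖x - α∇f(x) - x*‖ ≤ (1 - ηα)‖x - x*‖, where η = μL/(μ+L). -/
/-!
The contraction comes from the inequality
`(μ + L) ⟪g x - g y, x - y⟫ ≥ μ L ‖x - y‖² + ‖g x - g y‖²` (Nesterov, Thm. 2.1.12): expanding
`‖x - α g x - x*‖²` and using it at `y = x*` leaves `(1 - 2ηα) ‖x - x*‖² ≤ (1 - ηα)² ‖x - x*‖²`.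
The inequality is co-coercivity of the gradient of the convex, `(L - μ)`-smooth function
`f - μ/2 ‖·‖²`. Since `g` is only known through the two inequalities and not as a derivative,
the descent lemma behind co-coercivity is proved by repeatedly bisecting the segment rather
than by integrating along it.
-/

open RealInnerProductSpace Filter Topology

section Bregman

variable {E : Type*} [NormedAddCommGroup E] [InnerProductSpace ℝ E]

/-- The Bregman divergence of `f`, with an arbitrary map `g` standing in for its gradient. -/
def bregman (f : E → ℝ) (g : E → E) (x y : E) : ℝ := f y - f x - ⟪g x, y - x⟫

theorem bregman_add_bregman (f : E → ℝ) (g : E → E) (x y : E) :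
    bregman f g x y + bregman f g y x = ⟪g y - g x, y - x⟫ := by
  have : y - x = -(x - y) := (neg_sub x y).symm
  simp only [bregman, inner_sub_left, this, inner_neg_right]
  ring

theorem bregman_three_point (f : E → ℝ) (g : E → E) (x m y : E) :
    bregman f g x y = bregman f g x m + bregman f g m y + ⟪g m - g x, y - m⟫ := by
  have : y - x = (m - x) + (y - m) := by abel
  simp only [bregman, inner_sub_left, this, inner_add_right]
  ring

theorem bregman_sub_half_mul_norm_sq (f : E → ℝ) (g : E → E) (μ : ℝ) (x y : E) :
    bregman (fun z => f z - μ / 2 * ‖z‖ ^ 2) (fun z => g z - μ • z) x y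
      = bregman f g x y - μ / 2 * ‖y - x‖ ^ 2 := by
  simp only [bregman, inner_sub_left, real_inner_smul_left, inner_sub_right, norm_sub_sq_real,
    real_inner_self_eq_norm_sq, real_inner_comm x y]
  ring

variable {f : E → ℝ} {g : E → E} {K : ℝ}

/-- Bisecting the segment: the three-point identity at the midpoint turns a bound `c ‖y - x‖²`
into `(c / 2 + K / 4) ‖y - x‖²`, whose fixed point is `K / 2`. -/
theorem bregman_le_half_add_div_pow (hsub : ∀ x y, 0 ≤ bregman f g x y)
    (hg : ∀ x y, ⟪g y - g x, y - x⟫ ≤ K * ‖y - x‖ ^ 2) (n : ℕ) (x y : E) :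
    bregman f g x y ≤ (K / 2 + K / 2 ^ (n + 1)) * ‖y - x‖ ^ 2 := by
  induction n generalizing x y with
  | zero =>
    have := bregman_add_bregman f g x y
    linarith [hsub y x, hg x y]
  | succ n ih =>
    set m := x + (2 : ℝ)⁻¹ • (y - x)
    have hxm : m - x = (2 : ℝ)⁻¹ • (y - x) := by simp [m]
    have hmy : y - m = m - x := by rw [hxm]; simp only [m]; module
    have hnorm : ‖y - x‖ ^ 2 = 4 * ‖m - x‖ ^ 2 := by
      rw [hxm, norm_smul]; norm_num; ring
    calc bregman f g x y = bregman f g x m + bregman f g m y + ⟪g m - g x, m - x⟫ := by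
          rw [bregman_three_point f g x m y, hmy]
      _ ≤ (K / 2 + K / 2 ^ (n + 1)) * ‖m - x‖ ^ 2 + (K / 2 + K / 2 ^ (n + 1)) * ‖m - x‖ ^ 2
          + K * ‖m - x‖ ^ 2 := by
          gcongr
          · exact ih x m
          · rw [← hmy]; exact ih m y
          · exact hg x m
      _ = (K / 2 + K / 2 ^ (n + 1 + 1)) * ‖y - x‖ ^ 2 := by
          rw [hnorm, pow_succ]; field_simp; ring

theorem bregman_le_half_mul_norm_sq (hsub : ∀ x y, 0 ≤ bregman f g x y)
    (hg : ∀ x y, ⟪g y - g x, y - x⟫ ≤ K * ‖y - x‖ ^ 2) (x y : E) :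
    bregman f g x y ≤ K / 2 * ‖y - x‖ ^ 2 := by
  have hlim : Tendsto (fun n : ℕ => (K / 2 + K / 2 ^ (n + 1)) * ‖y - x‖ ^ 2) atTop
      (𝓝 ((K / 2 + 0) * ‖y - x‖ ^ 2)) := by
    refine (tendsto_const_nhds.add (tendsto_const_nhds.div_atTop ?_)).mul tendsto_const_nhds
    exact (tendsto_pow_atTop_atTop_of_one_lt one_lt_two).comp (tendsto_add_atTop_nat 1)
  rw [add_zero] at hlim
  exact ge_of_tendsto' hlim (bregman_le_half_add_div_pow hsub hg · x y)

/-- Compare `f` at `x` with `f` at `z = y - K⁻¹ (g y - g x)`, bounding `f z` from above by the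
descent lemma at `y`. -/
theorem norm_sq_le_two_mul_bregman (hsub : ∀ x y, 0 ≤ bregman f g x y)
    (hg : ∀ x y, ⟪g y - g x, y - x⟫ ≤ K * ‖y - x‖ ^ 2)
    (hK : 0 < K) (x y : E) :
    ‖g y - g x‖ ^ 2 ≤ 2 * K * bregman f g x y := by
  set w := g y - g x
  set z := y - K⁻¹ • w
  have hzy : z - y = -(K⁻¹ • w) := by simp [z]
  have hsplit := bregman_three_point f g x y z
  have hup := bregman_le_half_mul_norm_sq hsub hg y z
  rw [hzy, inner_neg_right, real_inner_smul_right, real_inner_self_eq_norm_sq] at hsplit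
  rw [hzy, norm_neg, norm_smul, Real.norm_of_nonneg (inv_nonneg.2 hK.le)] at hup
  have hbound : (2 * K)⁻¹ * ‖w‖ ^ 2 ≤ bregman f g x y := by
    have : K / 2 * (K⁻¹ * ‖w‖) ^ 2 = K⁻¹ * ‖w‖ ^ 2 - (2 * K)⁻¹ * ‖w‖ ^ 2 := by
      field_simp; ring
    linarith [hsub x z]
  calc ‖w‖ ^ 2 = 2 * K * ((2 * K)⁻¹ * ‖w‖ ^ 2) := by field_simp
    _ ≤ 2 * K * bregman f g x y := by gcongr

theorem norm_sq_le_mul_inner (hsub : ∀ x y, 0 ≤ bregman f g x y)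
    (hg : ∀ x y, ⟪g y - g x, y - x⟫ ≤ K * ‖y - x‖ ^ 2)
    (hK : 0 < K) (x y : E) :
    ‖g y - g x‖ ^ 2 ≤ K * ⟪g y - g x, y - x⟫ := by
  have h1 := norm_sq_le_two_mul_bregman hsub hg hK x y
  have h2 := norm_sq_le_two_mul_bregman hsub hg hK y x
  rw [← norm_neg, neg_sub] at h2
  rw [← bregman_add_bregman]
  linarith

variable {μ L : ℝ}

theorem mul_mul_norm_sq_add_norm_sq_le_inner
    (hsc : ∀ x y, μ / 2 * ‖y - x‖ ^ 2 ≤ bregman f g x y)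
    (hlip : ∀ x y, ‖g y - g x‖ ≤ L * ‖y - x‖) (hL : 0 ≤ L) (x y : E) :
    μ * L * ‖y - x‖ ^ 2 + ‖g y - g x‖ ^ 2 ≤ (μ + L) * ⟪g y - g x, y - x⟫ := by
  have hinner_le : ∀ x y : E, ⟪g y - g x, y - x⟫ ≤ L * ‖y - x‖ ^ 2 := fun x y => by
    have := real_inner_le_norm (g y - g x) (y - x)
    nlinarith [hlip x y, norm_nonneg (y - x)]
  have hmono : μ * ‖y - x‖ ^ 2 ≤ ⟪g y - g x, y - x⟫ := by
    have hyx := hsc y x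
    rw [norm_sub_rev] at hyx
    linarith [hsc x y, bregman_add_bregman f g x y]
  rcases lt_or_ge μ L with hμL | hLμ
  · -- `f - μ/2 ‖·‖²` is convex and `(L - μ)`-smooth, so its gradient is co-coercive.
    have hshift : ∀ x y : E, (g y - μ • y) - (g x - μ • x) = (g y - g x) - μ • (y - x) := by
      intro x y; module
    have hinner_shift : ∀ x y : E, ⟪(g y - μ • y) - (g x - μ • x), y - x⟫
        = ⟪g y - g x, y - x⟫ - μ * ‖y - x‖ ^ 2 := by
      intro x y
      rw [hshift, inner_sub_left, real_inner_smul_left, real_inner_self_eq_norm_sq]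
    have hcoco := norm_sq_le_mul_inner (f := fun z => f z - μ / 2 * ‖z‖ ^ 2)
      (g := fun z => g z - μ • z)
      (fun x y => by rw [bregman_sub_half_mul_norm_sq]; linarith [hsc x y])
      (fun x y => by rw [hinner_shift]; linarith [hinner_le x y]) (sub_pos.2 hμL) x y
    rw [hinner_shift, hshift, norm_sub_sq_real, norm_smul, real_inner_smul_right,
      Real.norm_eq_abs, mul_pow, sq_abs] at hcoco
    linear_combination hcoco
  · have hs : ‖g y - g x‖ ^ 2 ≤ L * (μ * ‖y - x‖ ^ 2) :=
      calc ‖g y - g x‖ ^ 2 ≤ (L * ‖y - x‖) ^ 2 := by gcongr; exact hlip x y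
        _ = L * (L * ‖y - x‖ ^ 2) := by ring
        _ ≤ L * (μ * ‖y - x‖ ^ 2) := by gcongr
    have hμ : 0 ≤ μ := hL.trans hLμ
    nlinarith [mul_le_mul_of_nonneg_left hmono (add_nonneg hμ hL),
      mul_nonneg (mul_nonneg hμ (sub_nonneg.2 hLμ)) (sq_nonneg ‖y - x‖)]

theorem norm_sub_smul_le_of_inner {v w : E} {α : ℝ} (hμ : 0 < μ) (hL : 0 < L) (hα : 0 ≤ α)
    (hα2 : α ≤ 2 / (μ + L))
    (h : μ * L * ‖v‖ ^ 2 + ‖w‖ ^ 2 ≤ (μ + L) * ⟪w, v⟫) :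
    ‖v - α • w‖ ≤ (1 - μ * L / (μ + L) * α) * ‖v‖ := by
  set η := μ * L / (μ + L)
  have hS : 0 < μ + L := by positivity
  have hexp : ‖v - α • w‖ ^ 2 = ‖v‖ ^ 2 - 2 * α * ⟪w, v⟫ + α ^ 2 * ‖w‖ ^ 2 := by
    rw [norm_sub_sq_real, real_inner_smul_right, norm_smul, Real.norm_of_nonneg hα,
      real_inner_comm]
    ring
  have hinner : η * ‖v‖ ^ 2 + ‖w‖ ^ 2 / (μ + L) ≤ ⟪w, v⟫ :=
    calc η * ‖v‖ ^ 2 + ‖w‖ ^ 2 / (μ + L) = (μ * L * ‖v‖ ^ 2 + ‖w‖ ^ 2) / (μ + L) := by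
          simp only [η]; ring
      _ ≤ ⟪w, v⟫ := (div_le_iff₀ hS).2 (by linarith)
  have hstep : α * ‖w‖ ^ 2 * (α - 2 / (μ + L)) ≤ 0 :=
    mul_nonpos_of_nonneg_of_nonpos (by positivity) (by linarith)
  have hηα : η * α ≤ 1 :=
    calc η * α ≤ η * (2 / (μ + L)) := by gcongr
      _ = 2 * μ * L / (μ + L) ^ 2 := by simp only [η]; field_simp
      _ ≤ 1 := by rw [div_le_one (by positivity)]; nlinarith [sq_nonneg (μ - L)]
  have hsq : ‖v - α • w‖ ^ 2 ≤ ((1 - η * α) * ‖v‖) ^ 2 := by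
    calc ‖v - α • w‖ ^ 2 = ‖v‖ ^ 2 - 2 * α * ⟪w, v⟫ + α ^ 2 * ‖w‖ ^ 2 := hexp
      _ ≤ ‖v‖ ^ 2 - 2 * α * (η * ‖v‖ ^ 2 + ‖w‖ ^ 2 / (μ + L)) + α ^ 2 * ‖w‖ ^ 2 := by
        gcongr
      _ = (1 - 2 * η * α) * ‖v‖ ^ 2 + α * ‖w‖ ^ 2 * (α - 2 / (μ + L)) := by ring
      _ ≤ ((1 - η * α) * ‖v‖) ^ 2 := by nlinarith [sq_nonneg (η * α * ‖v‖)]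
  exact (pow_le_pow_iff_left₀ (norm_nonneg _) (by nlinarith [norm_nonneg v]) two_ne_zero).1 hsq

end Bregman

theorem gradient_step_contraction_general
    (d : ℕ) (f : EuclideanSpace ℝ (Fin d) → ℝ)
    (g : EuclideanSpace ℝ (Fin d) → EuclideanSpace ℝ (Fin d))
    (μ L α : ℝ) (hμ : 0 < μ) (hL : 0 < L)
    (hsc : ∀ x y, f y ≥ f x + (inner ℝ (g x) (y - x) : ℝ) + μ / 2 * ‖y - x‖^2)
    (hsmooth : ∀ x y, ‖g y - g x‖ ≤ L * ‖y - x‖)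
    (xstar : EuclideanSpace ℝ (Fin d))
    (hg0 : g xstar = 0)
    (hα : 0 < α) (hα2 : α ≤ 2 / (μ + L))
    (x : EuclideanSpace ℝ (Fin d)) :
    ‖x - α • g x - xstar‖ ≤ (1 - (μ * L / (μ + L)) * α) * ‖x - xstar‖ := by
  have hsc' : ∀ a b, μ / 2 * ‖b - a‖ ^ 2 ≤ bregman f g a b := fun a b => by
    unfold bregman; linarith [hsc a b]
  have hkey := mul_mul_norm_sq_add_norm_sq_le_inner hsc' hsmooth hL.le xstar x
  rw [hg0, sub_zero] at hkey
  rw [show x - α • g x - xstar = (x - xstar) - α • g x by abel]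
  exact norm_sub_smul_le_of_inner hμ hL hα.le hα2 hkey

theorem gradient_step_contraction
    (d : ℕ) (f : EuclideanSpace ℝ (Fin d) → ℝ)
    (g : EuclideanSpace ℝ (Fin d) → EuclideanSpace ℝ (Fin d))
    (μ L α : ℝ) (hμ : 0 < μ) (hL : 0 < L)
    (hsc : ∀ x y, f y ≥ f x + (inner ℝ (g x) (y - x) : ℝ) + μ / 2 * ‖y - x‖^2)
    (hsmooth : ∀ x y, ‖g y - g x‖ ≤ L * ‖y - x‖)
    (xstar : EuclideanSpace ℝ (Fin d))
    (hmin : ∀ y, f xstar ≤ f y) (hg0 : g xstar = 0)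
    (hα : 0 < α) (hα2 : α ≤ 2 / (μ + L))
    (x : EuclideanSpace ℝ (Fin d)) :
    ‖x - α • g x - xstar‖ ≤ (1 - (μ * L / (μ + L)) * α) * ‖x - xstar‖ :=
  gradient_step_contraction_general d f g μ L α hμ hL hsc hsmooth xstar hg0 hα hα2 x
end

section
/- Let p = 1, q > 0, w ≥ 1, C₁, C₂ > 0 with C₁/w < 1 and q < C₁, and suppose a nonnegative sequence {A(t)} satisfies A(t+1) ≤ (1 - C₁/(t+w)) A(t) + C₂/(t+w)^{1+q} for all t ≥ 0. Then for all t ≥ 0, A(t) ≤ (w/(t+w))^{C₁} A(0) + (1/(C₁-q))·((w+1)/w)^{C₁}·QC₂/(t+w+1)^q, where Q = ((w+1)/w)^{1+q}. -/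
/-!
The comparison sequence `B t = (w / (t + w)) ^ C₁ * A 0 + K / (t + w + 1) ^ q`, with `K` the
constant of the bound, starts above `A 0` and satisfies the recursion with `≥` in place of `≤`, so
it dominates `A` by induction, the factors `1 - C₁ / (t + w)` being nonnegative. Both parts of the
supersolution inequality rest on the Bernoulli-type bound `1 - r / a ≤ (a / (a + 1)) ^ r` for
`r ≥ 0`. With `r = C₁` it handles the first part. With `r = q` it shows that `K / (x + 1) ^ q`
decreases by at most `q K / (x + 1) ^ (1 + q)` from `x` to `x + 1`; the contraction `C₁ / x`
pays for this loss and for the forcing term `C₂ / x ^ (1 + q) ≤ Q C₂ / (x + 1) ^ (1 + q)` (as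
`(x + 1) / x ≤ (w + 1) / w`) as soon as `Q C₂ ≤ (C₁ - q) K`.
-/

open Real

theorem le_of_recurrence_of_supersolution {A B a b : ℕ → ℝ} (ha : ∀ t, 0 ≤ a t)
    (hA : ∀ t, A (t + 1) ≤ a t * A t + b t) (hB : ∀ t, a t * B t + b t ≤ B (t + 1))
    (h₀ : A 0 ≤ B 0) : ∀ t, A t ≤ B t := by
  intro t
  induction t with
  | zero => exact h₀
  | succ t ih =>
    calc A (t + 1) ≤ a t * A t + b t := hA t
      _ ≤ a t * B t + b t := by gcongr; exact ha t
      _ ≤ B (t + 1) := hB t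

theorem one_sub_div_le_div_add_one_rpow {r a : ℝ} (hr : 0 ≤ r) (ha : 0 < a) :
    1 - r / a ≤ (a / (a + 1)) ^ r := by
  have hlog : -(1 / a) ≤ log (a / (a + 1)) := by
    have h := one_sub_inv_le_log_of_pos (show 0 < a / (a + 1) by positivity)
    rw [inv_div] at h
    have : 1 - (a + 1) / a = -(1 / a) := by field_simp; ring
    linarith
  calc 1 - r / a = r * -(1 / a) + 1 := by ring
    _ ≤ r * log (a / (a + 1)) + 1 := by gcongr
    _ ≤ exp (log (a / (a + 1)) * r) := by rw [mul_comm]; exact add_one_le_exp _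
    _ = (a / (a + 1)) ^ r := (rpow_def_of_pos (by positivity) r).symm

theorem one_sub_div_mul_div_rpow_le {r a w : ℝ} (hr : 0 ≤ r) (ha : 0 < a) (hw : 0 ≤ w) :
    (1 - r / a) * (w / a) ^ r ≤ (w / (a + 1)) ^ r := by
  have hsplit : (w / (a + 1)) ^ r = (a / (a + 1)) ^ r * (w / a) ^ r := by
    rw [← mul_rpow (by positivity) (by positivity)]
    congr 1
    field_simp
  rw [hsplit]
  gcongr
  exact one_sub_div_le_div_add_one_rpow hr ha

theorem one_div_rpow_sub_one_div_add_one_rpow_le {q a : ℝ} (hq : 0 ≤ q) (ha : 0 < a) :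
    1 / a ^ q - 1 / (a + 1) ^ q ≤ q / a ^ (1 + q) := by
  have h := one_sub_div_le_div_add_one_rpow hq ha
  rw [div_rpow ha.le (by positivity)] at h
  rw [rpow_add ha, rpow_one]
  have hinv : 1 / (a + 1) ^ q = (a ^ q / (a + 1) ^ q) / a ^ q := by field_simp
  rw [hinv]
  calc 1 / a ^ q - (a ^ q / (a + 1) ^ q) / a ^ q ≤ 1 / a ^ q - (1 - q / a) / a ^ q := by
        gcongr
    _ = q / (a * a ^ q) := by field_simp; ring

theorem div_rpow_le_div_add_one_rpow {p c w x : ℝ} (hp : 0 ≤ p) (hc : 0 ≤ c) (hw : 0 < w)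
    (hx : w ≤ x) : c / x ^ p ≤ ((w + 1) / w) ^ p * c / (x + 1) ^ p := by
  have hx₀ : 0 < x := hw.trans_le hx
  have hsplit : (x + 1) ^ p = ((x + 1) / x) ^ p * x ^ p := by
    rw [← mul_rpow (by positivity) hx₀.le]
    congr 1
    field_simp
  have hratio : (x + 1) / x ≤ (w + 1) / w := by
    rw [div_le_div_iff₀ hx₀ hw]
    linarith
  rw [hsplit, mul_div_mul_comm, mul_comm]
  exact le_mul_of_one_le_right (by positivity) ((one_le_div (by positivity)).mpr (by gcongr))

theorem one_sub_div_mul_div_rpow_add_div_rpow_le {r q c w x K : ℝ} (hq : 0 ≤ q) (hr : 0 ≤ r)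
    (hc : 0 ≤ c) (hw : 0 < w) (hx : w ≤ x) (hK₀ : 0 ≤ K)
    (hK : ((w + 1) / w) ^ (1 + q) * c ≤ (r - q) * K) :
    (1 - r / x) * (K / (x + 1) ^ q) + c / x ^ (1 + q) ≤ K / (x + 1 + 1) ^ q := by
  have hx₀ : 0 < x := hw.trans_le hx
  have hdecay : K / (x + 1) ^ q - K / (x + 1 + 1) ^ q ≤ q * K / (x + 1) ^ (1 + q) := by
    have h := mul_le_mul_of_nonneg_left
      (one_div_rpow_sub_one_div_add_one_rpow_le hq (by positivity : 0 < x + 1)) hK₀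
    rw [mul_sub, mul_one_div, mul_one_div, mul_div_assoc'] at h
    rwa [mul_comm K q] at h
  have hforce : c / x ^ (1 + q) ≤ (r - q) * K / (x + 1) ^ (1 + q) :=
    (div_rpow_le_div_add_one_rpow (by linarith) hc hw hx).trans
      (div_le_div_of_nonneg_right hK (by positivity))
  have hcontract : r * K / (x + 1) ^ (1 + q) ≤ r / x * (K / (x + 1) ^ q) := by
    rw [rpow_add (by positivity), rpow_one, div_mul_div_comm]
    gcongr
    linarith
  have hsum : q * K / (x + 1) ^ (1 + q) + (r - q) * K / (x + 1) ^ (1 + q)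
      = r * K / (x + 1) ^ (1 + q) := by ring
  linarith

noncomputable def comparisonBound (r q w K a₀ x : ℝ) : ℝ :=
  (w / x) ^ r * a₀ + K / (x + 1) ^ q

theorem comparisonBound_supersolution {r q c w x K a₀ : ℝ} (hq : 0 ≤ q) (hr : 0 ≤ r)
    (hc : 0 ≤ c) (hw : 0 < w) (hx : w ≤ x) (hK₀ : 0 ≤ K)
    (hK : ((w + 1) / w) ^ (1 + q) * c ≤ (r - q) * K) (ha₀ : 0 ≤ a₀) :
    (1 - r / x) * comparisonBound r q w K a₀ x + c / x ^ (1 + q)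
      ≤ comparisonBound r q w K a₀ (x + 1) := by
  unfold comparisonBound
  calc (1 - r / x) * ((w / x) ^ r * a₀ + K / (x + 1) ^ q) + c / x ^ (1 + q)
      = (1 - r / x) * (w / x) ^ r * a₀
        + ((1 - r / x) * (K / (x + 1) ^ q) + c / x ^ (1 + q)) := by ring
    _ ≤ (w / (x + 1)) ^ r * a₀ + K / (x + 1 + 1) ^ q := by
      gcongr ?_ * _ + ?_
      · exact one_sub_div_mul_div_rpow_le hr (hw.trans_le hx) hw.le
      · exact one_sub_div_mul_div_rpow_add_div_rpow_le hq hr hc hw hx hK₀ hK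

theorem sequential_estimate_p_one_q_lt_general
    (q w C₁ C₂ : ℝ) (hq : 0 < q) (hw : 1 ≤ w)
    (hC₂ : 0 < C₂)
    (hstep : C₁ / w < 1) (hqC : q < C₁)
    (A : ℕ → ℝ) (hA : ∀ t, 0 ≤ A t)
    (hrec : ∀ t : ℕ, A (t + 1) ≤
      (1 - C₁ / ((t : ℝ) + w)) * A t + C₂ / ((t : ℝ) + w) ^ (1 + q)) :
    ∀ t : ℕ,
      A t ≤ (w / ((t : ℝ) + w)) ^ C₁ * A 0
          + 1 / (C₁ - q) * ((w + 1) / w) ^ C₁ *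
              (((w + 1) / w) ^ (1 + q) * C₂) / ((t : ℝ) + w + 1) ^ q := by
  have hC₁ : 0 < C₁ := hq.trans hqC
  have hw₀ : 0 < w := by linarith
  have hgap : 0 < C₁ - q := by linarith
  set K := 1 / (C₁ - q) * ((w + 1) / w) ^ C₁ * (((w + 1) / w) ^ (1 + q) * C₂) with hK_def
  have hK : ((w + 1) / w) ^ (1 + q) * C₂ ≤ (C₁ - q) * K := by
    rw [show (C₁ - q) * K = ((w + 1) / w) ^ C₁ * (((w + 1) / w) ^ (1 + q) * C₂) by
      rw [hK_def]; field_simp]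
    exact le_mul_of_one_le_left (by positivity)
      (one_le_rpow ((one_le_div hw₀).mpr (by linarith)) hC₁.le)
  have hx : ∀ t : ℕ, w ≤ (t : ℝ) + w := fun t => le_add_of_nonneg_left t.cast_nonneg
  refine le_of_recurrence_of_supersolution
    (B := fun t : ℕ => comparisonBound C₁ q w K (A 0) (t + w)) (fun t => ?_) hrec (fun t => ?_) ?_
  · have : C₁ / ((t : ℝ) + w) ≤ C₁ / w := by gcongr; exact hx t
    linarith
  · rw [Nat.cast_succ, add_right_comm]
    exact comparisonBound_supersolution hq.le hC₁.le hC₂.le hw₀ (hx t) (by positivity) hK (hA 0)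
  · simp only [comparisonBound, Nat.cast_zero, zero_add, div_self hw₀.ne', one_rpow, one_mul]
    have : 0 < K / (w + 1) ^ q := by positivity
    linarith

theorem sequential_estimate_p_one_q_lt
    (q w C₁ C₂ : ℝ) (hq : 0 < q) (hw : 1 ≤ w)
    (hC₁ : 0 < C₁) (hC₂ : 0 < C₂)
    (hstep : C₁ / w < 1) (hqC : q < C₁)
    (A : ℕ → ℝ) (hA : ∀ t, 0 ≤ A t)
    (hrec : ∀ t : ℕ, A (t + 1) ≤
      (1 - C₁ / ((t : ℝ) + w)) * A t + C₂ / ((t : ℝ) + w) ^ (1 + q)) :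
    ∀ t : ℕ,
      A t ≤ (w / ((t : ℝ) + w)) ^ C₁ * A 0
          + 1 / (C₁ - q) * ((w + 1) / w) ^ C₁ *
              (((w + 1) / w) ^ (1 + q) * C₂) / ((t : ℝ) + w + 1) ^ q :=
  sequential_estimate_p_one_q_lt_general q w C₁ C₂ hq hw hC₂ hstep hqC A hA hrec
end

section
/- Let p = 1, q > 0, w ≥ 1, C₁, C₂ > 0 with C₁/w < 1 and q > C₁, and suppose a nonnegative sequence {A(t)} satisfies A(t+1) ≤ (1 - C₁/(t+w)) A(t) + C₂/(t+w)^{1+q} for all t ≥ 0. Then for all t ≥ 0, A(t) ≤ (w/(t+w))^{C₁} A(0) + (w^{C₁-q}/(q-C₁))·QC₂/(t+w)^{C₁}, where Q = ((w+1)/w)^{1+q}. -/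
/-!
Multiplying the recursion by `(t + 1 + w) ^ C₁` and using Bernoulli's inequality
`(1 + 1/s) ^ C₁ * (1 - C₁/s) ≤ 1` shows that `(t + w) ^ C₁ * A t` grows by at most
`Q * C₂ * (t + 1 + w) ^ (C₁ - 1 - q)` per step. Since `C₁ - 1 - q < -1`, these increments are
dominated by the telescoping differences of `(t + w) ^ (C₁ - q) / (q - C₁)`, so their sum is at
most `w ^ (C₁ - q) / (q - C₁)`.
-/

open Real Finset

theorem one_sub_mul_le_one_add_rpow_neg {x c : ℝ} (hx : -1 < x) (hc : 0 ≤ c) :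
    1 - c * x ≤ (1 + x) ^ (-c) :=
  calc 1 - c * x ≤ exp (x * -c) := by linarith [add_one_le_exp (x * -c)]
    _ = exp x ^ (-c) := by rw [exp_mul]
    _ ≤ (1 + x) ^ (-c) :=
      rpow_le_rpow_of_nonpos (by linarith) (by linarith [add_one_le_exp x]) (by linarith)

theorem add_one_rpow_mul_one_sub_div_le {s c : ℝ} (hs : 0 < s) (hc : 0 ≤ c) :
    (s + 1) ^ c * (1 - c / s) ≤ s ^ c := by
  have hx : -1 < 1 / s := by linarith [one_div_pos.2 hs]
  calc (s + 1) ^ c * (1 - c / s) ≤ (s + 1) ^ c * (1 + 1 / s) ^ (-c) := by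
        rw [← mul_one_div c s]
        gcongr
        exact one_sub_mul_le_one_add_rpow_neg hx hc
    _ = s ^ c := by
        rw [show 1 + 1 / s = (s + 1) / s by field_simp, rpow_neg (by positivity),
          div_rpow (by positivity) hs.le]
        field_simp

theorem mul_add_one_rpow_neg_add_one_le_sub {a c : ℝ} (ha : 0 < a) (hc : 0 ≤ c) :
    c * (a + 1) ^ (-(c + 1)) ≤ a ^ (-c) - (a + 1) ^ (-c) := by
  have hx : -1 < -(1 / (a + 1)) := by
    rw [neg_lt_neg_iff, div_lt_one (by positivity)]; linarith
  have hbern := one_sub_mul_le_one_add_rpow_neg hx hc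
  rw [show 1 + -(1 / (a + 1)) = a / (a + 1) by field_simp; ring,
    div_rpow ha.le (by positivity)] at hbern
  have hpos : 0 < (a + 1) ^ (-c) := by positivity
  rw [le_div_iff₀ hpos] at hbern
  rw [show -(c + 1) = -c - 1 by ring, rpow_sub_one (by positivity)]
  calc c * ((a + 1) ^ (-c) / (a + 1)) = (1 - c * -(1 / (a + 1))) * (a + 1) ^ (-c)
        - (a + 1) ^ (-c) := by ring
    _ ≤ _ := by linarith

theorem sum_range_rpow_neg_add_one_le {w c : ℝ} (hw : 0 < w) (hc : 0 < c) (t : ℕ) :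
    ∑ k ∈ range t, ((k : ℝ) + 1 + w) ^ (-(c + 1)) ≤ w ^ (-c) / c := by
  rw [le_div_iff₀ hc, sum_mul]
  calc ∑ k ∈ range t, ((k : ℝ) + 1 + w) ^ (-(c + 1)) * c
      ≤ ∑ k ∈ range t, (((k : ℝ) + w) ^ (-c) - ((k + 1 : ℕ) + w) ^ (-c)) := by
        gcongr with k
        have := mul_add_one_rpow_neg_add_one_le_sub (a := (k : ℝ) + w) (by positivity) hc.le
        rw [add_right_comm] at this
        push_cast
        linarith
    _ = w ^ (-c) - ((t : ℝ) + w) ^ (-c) := by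
        rw [sum_range_sub']; simp
    _ ≤ w ^ (-c) := by linarith [rpow_pos_of_pos (by positivity : 0 < (t : ℝ) + w) (-c)]

theorem le_add_sum_of_succ_le_add {B d : ℕ → ℝ} (h : ∀ t, B (t + 1) ≤ B t + d t) (t : ℕ) :
    B t ≤ B 0 + ∑ k ∈ range t, d k := by
  have := sum_le_sum fun k (_ : k ∈ range t) => sub_le_iff_le_add'.2 (h k)
  rw [sum_range_sub] at this
  linarith

theorem add_one_rpow_mul_le_of_le_one_sub_div_mul_add {s w c p C a a' : ℝ} (hw : 0 < w)
    (hws : w ≤ s) (hc : 0 ≤ c) (hp : 0 ≤ p) (hC : 0 ≤ C) (ha : 0 ≤ a)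
    (h : a' ≤ (1 - c / s) * a + C / s ^ p) :
    (s + 1) ^ c * a' ≤ s ^ c * a + ((w + 1) / w) ^ p * C * (s + 1) ^ (c - p) := by
  have hs : 0 < s := hw.trans_le hws
  have hforce : (s + 1) ^ c * (C / s ^ p) ≤ ((w + 1) / w) ^ p * C * (s + 1) ^ (c - p) :=
    calc (s + 1) ^ c * (C / s ^ p) = ((s + 1) / s) ^ p * C * (s + 1) ^ (c - p) := by
          rw [div_rpow (by positivity) hs.le, rpow_sub (by positivity)]
          field_simp
      _ ≤ ((w + 1) / w) ^ p * C * (s + 1) ^ (c - p) := by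
          gcongr ?_ ^ _ * _ * _
          rw [div_le_div_iff₀ hs hw]
          linarith
  calc (s + 1) ^ c * a' ≤ (s + 1) ^ c * ((1 - c / s) * a + C / s ^ p) := by gcongr
    _ = (s + 1) ^ c * (1 - c / s) * a + (s + 1) ^ c * (C / s ^ p) := by ring
    _ ≤ s ^ c * a + ((w + 1) / w) ^ p * C * (s + 1) ^ (c - p) :=
        add_le_add (mul_le_mul_of_nonneg_right (add_one_rpow_mul_one_sub_div_le hs hc) ha)
          hforce

theorem sequential_estimate_p_one_q_gt_general
    (q w C₁ C₂ : ℝ) (hw : 1 ≤ w)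
    (hC₁ : 0 < C₁) (hC₂ : 0 < C₂)
    (hqC : C₁ < q)
    (A : ℕ → ℝ) (hA : ∀ t, 0 ≤ A t)
    (hrec : ∀ t : ℕ, A (t + 1) ≤
      (1 - C₁ / ((t : ℝ) + w)) * A t + C₂ / ((t : ℝ) + w) ^ (1 + q)) :
    ∀ t : ℕ,
      A t ≤ (w / ((t : ℝ) + w)) ^ C₁ * A 0
          + w ^ (C₁ - q) / (q - C₁) *
              (((w + 1) / w) ^ (1 + q) * C₂) / ((t : ℝ) + w) ^ C₁ := by
  intro t
  have hw₀ : 0 < w := by linarith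
  set Q := ((w + 1) / w) ^ (1 + q)
  have hweighted : ∀ k : ℕ, (((k + 1 : ℕ) : ℝ) + w) ^ C₁ * A (k + 1) ≤
      ((k : ℝ) + w) ^ C₁ * A k + Q * C₂ * ((k : ℝ) + 1 + w) ^ (-((q - C₁) + 1)) := by
    intro k
    have := add_one_rpow_mul_le_of_le_one_sub_div_mul_add hw₀
      (le_add_of_nonneg_left k.cast_nonneg) hC₁.le (by linarith) hC₂.le (hA k) (hrec k)
    rwa [show -((q - C₁) + 1) = C₁ - (1 + q) by ring, Nat.cast_succ, add_right_comm]
  have hB := le_add_sum_of_succ_le_add (B := fun k : ℕ => ((k : ℝ) + w) ^ C₁ * A k) hweighted t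
  rw [← mul_sum, Nat.cast_zero, zero_add] at hB
  have hsum := sum_range_rpow_neg_add_one_le hw₀ (sub_pos.2 hqC) t
  rw [neg_sub] at hsum
  have htw : 0 < ((t : ℝ) + w) ^ C₁ := by positivity
  rw [div_rpow hw₀.le (by positivity), div_mul_eq_mul_div, ← add_div, le_div_iff₀ htw]
  linarith [mul_le_mul_of_nonneg_left hsum (by positivity : 0 ≤ Q * C₂)]

theorem sequential_estimate_p_one_q_gt
    (q w C₁ C₂ : ℝ) (hq : 0 < q) (hw : 1 ≤ w)
    (hC₁ : 0 < C₁) (hC₂ : 0 < C₂)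
    (hstep : C₁ / w < 1) (hqC : C₁ < q)
    (A : ℕ → ℝ) (hA : ∀ t, 0 ≤ A t)
    (hrec : ∀ t : ℕ, A (t + 1) ≤
      (1 - C₁ / ((t : ℝ) + w)) * A t + C₂ / ((t : ℝ) + w) ^ (1 + q)) :
    ∀ t : ℕ,
      A t ≤ (w / ((t : ℝ) + w)) ^ C₁ * A 0
          + w ^ (C₁ - q) / (q - C₁) *
              (((w + 1) / w) ^ (1 + q) * C₂) / ((t : ℝ) + w) ^ C₁ :=
  sequential_estimate_p_one_q_gt_general q w C₁ C₂ hw hC₁ hC₂ hqC A hA hrec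
end

section
/- Let β ∈ (0,1), a, b, w > 0, p ∈ (0,1) with a/w^p < 1. Suppose a nonnegative sequence {B(t)} satisfies B(0) = 0 and B(t+1) ≤ (1 - a/(t+w)^p) B(t) + bβ^t/(t+w)^p for all t ≥ 0. Then for all t ≥ 0, B(t+1) ≤ (b/(w^p(1-β)))·(e^{-(a/2)·t/(t+1+w)^p} + β^{⌊t/2⌋}). -/
/-!
Unrolling the recursion gives `B (t + 1) ≤ ∑_{s ≤ t} (∏_{s < r ≤ t} c r) g s` with
`c r = 1 - a / (r + w) ^ p ∈ (0, 1)` and `g s = b β ^ s / (s + w) ^ p ≤ (b / w ^ p) β ^ s`.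
Split the sum at `K = ⌊t / 2⌋`. For `s ≤ K` the product has at least `t / 2` factors, each at
most `exp (-a / (t + w) ^ p)`, so it is at most `exp (-(a / 2) t / (t + 1 + w) ^ p)`, and the
remaining geometric sum is at most `1 / (1 - β)`. For `s > K` the product is at most `1` and the
geometric tail is at most `β ^ K / (1 - β)`.
-/

open Finset Real

lemma le_sum_prod_of_le_mul_add {B c g : ℕ → ℝ} (hB0 : B 0 = 0) (hc : ∀ t, 0 ≤ c t)
    (hrec : ∀ t, B (t + 1) ≤ c t * B t + g t) (t : ℕ) :
    B t ≤ ∑ s ∈ range t, (∏ r ∈ Ico (s + 1) t, c r) * g s := by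
  induction t with
  | zero => simp [hB0]
  | succ t ih =>
    calc B (t + 1) ≤ c t * B t + g t := hrec t
      _ ≤ c t * ∑ s ∈ range t, (∏ r ∈ Ico (s + 1) t, c r) * g s + g t := by
        gcongr
        exact hc t
      _ = ∑ s ∈ range (t + 1), (∏ r ∈ Ico (s + 1) (t + 1), c r) * g s := by
        rw [sum_range_succ, Ico_self, prod_empty, one_mul, mul_sum]
        congr 1
        refine sum_congr rfl fun s hs => ?_
        rw [prod_Ico_succ_top (by simpa using hs)]
        ring

lemma prod_le_exp_neg_mul_card {ι : Type*} (S : Finset ι) {c : ι → ℝ} {δ : ℝ}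
    (hc0 : ∀ i ∈ S, 0 ≤ c i) (hc : ∀ i ∈ S, c i ≤ 1 - δ) :
    ∏ i ∈ S, c i ≤ exp (-(δ * #S)) := by
  calc ∏ i ∈ S, c i ≤ ∏ _i ∈ S, exp (-δ) :=
        prod_le_prod hc0 fun i hi => (hc i hi).trans (by linarith [add_one_le_exp (-δ)])
    _ = exp (-(δ * #S)) := by
        rw [prod_const, ← exp_nat_mul]
        ring_nf

lemma sum_range_mul_le_of_le_geom {P g : ℕ → ℝ} {C E β : ℝ} {K t : ℕ} (hKt : K ≤ t)
    (hβ0 : 0 ≤ β) (hβ1 : β < 1) (hP0 : ∀ s, 0 ≤ P s) (hP1 : ∀ s, P s ≤ 1)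
    (hPE : ∀ s ≤ K, P s ≤ E) (hg0 : ∀ s, 0 ≤ g s) (hg : ∀ s, g s ≤ C * β ^ s) :
    ∑ s ∈ range (t + 1), P s * g s ≤ C / (1 - β) * (E + β ^ K) := by
  have hC : 0 ≤ C := by simpa using (hg0 0).trans (hg 0)
  have hβ : 0 < 1 - β := by linarith
  have head : ∑ s ∈ range (K + 1), P s * g s ≤ E * (C / (1 - β)) :=
    calc ∑ s ∈ range (K + 1), P s * g s ≤ ∑ s ∈ range (K + 1), E * (C * β ^ s) :=
          sum_le_sum fun s hs => by
            have hsK : s ≤ K := Nat.lt_succ_iff.mp (mem_range.mp hs)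
            exact mul_le_mul (hPE s hsK) (hg s) (hg0 s) ((hP0 s).trans (hPE s hsK))
      _ = E * (C * ∑ s ∈ Ico 0 (K + 1), β ^ s) := by rw [range_eq_Ico, mul_sum, mul_sum]
      _ ≤ E * (C * (β ^ 0 / (1 - β))) := by
          gcongr
          · exact (hP0 0).trans (hPE 0 K.zero_le)
          · exact geom_sum_Ico_le_of_lt_one hβ0 hβ1
      _ = E * (C / (1 - β)) := by rw [pow_zero, mul_one_div]
  have tail : ∑ s ∈ Ico (K + 1) (t + 1), P s * g s ≤ β ^ K * (C / (1 - β)) :=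
    calc ∑ s ∈ Ico (K + 1) (t + 1), P s * g s ≤ ∑ s ∈ Ico (K + 1) (t + 1), C * β ^ s :=
          sum_le_sum fun s _ => (mul_le_of_le_one_left (hg0 s) (hP1 s)).trans (hg s)
      _ ≤ C * (β ^ (K + 1) / (1 - β)) := by
          rw [← mul_sum]
          exact mul_le_mul_of_nonneg_left (geom_sum_Ico_le_of_lt_one hβ0 hβ1) hC
      _ ≤ C * (β ^ K / (1 - β)) :=
          mul_le_mul_of_nonneg_left
            (div_le_div_of_nonneg_right (pow_le_pow_of_le_one hβ0 hβ1.le K.le_succ) hβ.le) hC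
      _ = β ^ K * (C / (1 - β)) := by ring
  calc ∑ s ∈ range (t + 1), P s * g s
      = ∑ s ∈ range (K + 1), P s * g s + ∑ s ∈ Ico (K + 1) (t + 1), P s * g s :=
        (sum_range_add_sum_Ico _ (by omega)).symm
    _ ≤ E * (C / (1 - β)) + β ^ K * (C / (1 - β)) := add_le_add head tail
    _ = C / (1 - β) * (E + β ^ K) := by ring

section StepCoefficient

variable {a w p : ℝ}

lemma one_sub_div_rpow_pos (ha : 0 ≤ a) (hw : 0 < w) (hp : 0 ≤ p) (hstep : a / w ^ p < 1)
    (r : ℕ) : 0 < 1 - a / ((r : ℝ) + w) ^ p := by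
  have : a / ((r : ℝ) + w) ^ p ≤ a / w ^ p := by
    gcongr
    exact le_add_of_nonneg_left r.cast_nonneg
  linarith

lemma one_sub_div_rpow_le_one (ha : 0 ≤ a) (hw : 0 ≤ w) (r : ℕ) :
    1 - a / ((r : ℝ) + w) ^ p ≤ 1 :=
  sub_le_self _ (by positivity)

lemma one_sub_div_rpow_mono (ha : 0 ≤ a) (hw : 0 < w) (hp : 0 ≤ p) {r t : ℕ} (hrt : r ≤ t) :
    1 - a / ((r : ℝ) + w) ^ p ≤ 1 - a / ((t : ℝ) + w) ^ p := by
  gcongr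

lemma prod_one_sub_div_rpow_le_exp (ha : 0 ≤ a) (hw : 0 < w) (hp : 0 ≤ p)
    (hstep : a / w ^ p < 1) {s t : ℕ} (hs : s ≤ t / 2) :
    ∏ r ∈ Ico (s + 1) (t + 1), (1 - a / ((r : ℝ) + w) ^ p) ≤
      exp (-(a / 2) * t / ((t : ℝ) + 1 + w) ^ p) := by
  have hcard : (t : ℝ) ≤ 2 * (#(Ico (s + 1) (t + 1)) : ℝ) := by
    rw [Nat.card_Ico]
    exact_mod_cast (by omega : t ≤ 2 * (t + 1 - (s + 1)))
  refine (prod_le_exp_neg_mul_card _ (fun r _ => (one_sub_div_rpow_pos ha hw hp hstep r).le)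
    fun r hr => one_sub_div_rpow_mono ha hw hp (Nat.lt_succ_iff.mp (mem_Ico.mp hr).2)).trans ?_
  rw [exp_le_exp, neg_mul, neg_div, neg_le_neg_iff]
  calc a / 2 * t / ((t : ℝ) + 1 + w) ^ p ≤ a / 2 * t / ((t : ℝ) + w) ^ p := by
        gcongr
        linarith
    _ ≤ a * #(Ico (s + 1) (t + 1)) / ((t : ℝ) + w) ^ p := by
        gcongr ?_ / _
        nlinarith
    _ = a / ((t : ℝ) + w) ^ p * #(Ico (s + 1) (t + 1)) := div_mul_eq_mul_div .. |>.symm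

end StepCoefficient

theorem geometric_perturbation_estimate_p_lt_one_general
    (β a b w p : ℝ) (hβ : β ∈ Set.Ioo (0 : ℝ) 1)
    (ha : 0 < a) (hb : 0 < b) (hw : 0 < w)
    (hp : 0 < p) (hstep : a / w ^ p < 1)
    (B : ℕ → ℝ) (hB0 : B 0 = 0)
    (hrec : ∀ t : ℕ, B (t + 1) ≤
      (1 - a / ((t : ℝ) + w) ^ p) * B t + b * β ^ t / ((t : ℝ) + w) ^ p) :
    ∀ t : ℕ, B (t + 1) ≤ b / (w ^ p * (1 - β)) *
      (Real.exp (-(a / 2) * t / ((t : ℝ) + 1 + w) ^ p) + β ^ (t / 2 : ℕ)) := by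
  intro t
  obtain ⟨hβ0, hβ1⟩ := hβ
  have hc0 r := (one_sub_div_rpow_pos ha.le hw hp.le hstep r).le
  have hg (s : ℕ) : b * β ^ s / ((s : ℝ) + w) ^ p ≤ b / w ^ p * β ^ s := by
    rw [div_mul_eq_mul_div, mul_comm b]
    gcongr
    linarith [s.cast_nonneg (α := ℝ)]
  rw [← div_div]
  refine (le_sum_prod_of_le_mul_add hB0 hc0 hrec (t + 1)).trans <|
    sum_range_mul_le_of_le_geom (Nat.div_le_self t 2) hβ0.le hβ1
      (fun s => prod_nonneg fun r _ => hc0 r)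
      (fun s => prod_le_one (fun r _ => hc0 r) fun r _ => one_sub_div_rpow_le_one ha.le hw.le r)
      (fun s hs => prod_one_sub_div_rpow_le_exp ha.le hw hp.le hstep hs)
      (fun s => by positivity) hg

theorem geometric_perturbation_estimate_p_lt_one
    (β a b w p : ℝ) (hβ : β ∈ Set.Ioo (0 : ℝ) 1)
    (ha : 0 < a) (hb : 0 < b) (hw : 0 < w)
    (hp : 0 < p) (hp1 : p < 1) (hstep : a / w ^ p < 1)
    (B : ℕ → ℝ) (hBnonneg : ∀ t, 0 ≤ B t) (hB0 : B 0 = 0)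
    (hrec : ∀ t : ℕ, B (t + 1) ≤
      (1 - a / ((t : ℝ) + w) ^ p) * B t + b * β ^ t / ((t : ℝ) + w) ^ p) :
    ∀ t : ℕ, B (t + 1) ≤ b / (w ^ p * (1 - β)) *
      (Real.exp (-(a / 2) * t / ((t : ℝ) + 1 + w) ^ p) + β ^ (t / 2 : ℕ)) :=
  geometric_perturbation_estimate_p_lt_one_general β a b w p hβ ha hb hw hp hstep B hB0 hrec
end

section
/- Suppose a nonnegative sequence {B(t)} satisfies B(t+1) ≤ βB(t) + dα(t) for all t ≥ 0, where β ∈ (0,1), d > 0, and {α(t)} is a non-increasing positive sequence. Then for all t ≥ 2: B(t) ≤ (d/(1-β))·α(⌊t/2⌋) + β^t B(0) + (β^{t/2}d/(1-β))·α(0). -/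
/-! Split the time interval at `m = ⌊t/2⌋`. On `[0, m]` the forcing `d α(k)` is at most `d α(0)`
and on `[m, t]` at most `d α(m)`, so on each stretch the recursion has constant forcing and is
solved explicitly. Composing the two stretches, the error accumulated on the first one is damped
by `β^(t-m) ≤ β^(t/2)`. -/

/-- The constant `c / (1 - β)` absorbs the geometric sum of the unrolled recursion because
`β * (c / (1 - β)) + c = c / (1 - β)`. -/
theorem le_pow_mul_add_div_one_sub {β c : ℝ} {u : ℕ → ℝ} (hβ0 : 0 ≤ β) (hβ1 : β < 1)
    (hc : 0 ≤ c) (h : ∀ k, u (k + 1) ≤ β * u k + c) (n : ℕ) :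
    u n ≤ β ^ n * u 0 + c / (1 - β) := by
  have h1β : 0 < 1 - β := sub_pos.mpr hβ1
  induction n with
  | zero => simp only [pow_zero, one_mul, le_add_iff_nonneg_right]; positivity
  | succ n ih =>
    calc u (n + 1) ≤ β * u n + c := h n
      _ ≤ β * (β ^ n * u 0 + c / (1 - β)) + c := by gcongr
      _ = β ^ (n + 1) * u 0 + c / (1 - β) := by field_simp; ring

theorem pow_sub_half_le_rpow_half {β : ℝ} (hβ0 : 0 < β) (hβ1 : β ≤ 1) (t : ℕ) :
    β ^ (t - t / 2) ≤ β ^ ((t : ℝ) / 2) := by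
  rw [← Real.rpow_natCast]
  refine Real.rpow_le_rpow_of_exponent_ge hβ0 hβ1 ?_
  have h2 : ((t / 2 : ℕ) : ℝ) ≤ (t : ℝ) / 2 := Nat.cast_div_le
  rw [Nat.cast_sub (Nat.div_le_self t 2)]
  linarith

theorem consensus_error_estimate_general
    (β d : ℝ) (hβ : β ∈ Set.Ioo (0 : ℝ) 1) (hd : 0 < d)
    (α : ℕ → ℝ) (hαpos : ∀ t, 0 < α t) (hαmono : ∀ t, α (t + 1) ≤ α t)
    (B : ℕ → ℝ)
    (hrec : ∀ t, B (t + 1) ≤ β * B t + d * α t) :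
    ∀ t : ℕ, 2 ≤ t →
      B t ≤ d / (1 - β) * α (t / 2) + β ^ t * B 0
        + β ^ ((t : ℝ) / 2) * d / (1 - β) * α 0 := by
  obtain ⟨hβ0, hβ1⟩ := hβ
  have hα : Antitone α := antitone_nat_of_succ_le hαmono
  have hrec_from (m : ℕ) (k : ℕ) : B (m + k + 1) ≤ β * B (m + k) + d * α m :=
    (hrec (m + k)).trans (by gcongr; exact hα (Nat.le_add_right m k))
  intro t _
  set m := t / 2
  have hhead : B m ≤ β ^ m * B 0 + d * α 0 / (1 - β) :=
    le_pow_mul_add_div_one_sub (u := B) hβ0.le hβ1 (mul_nonneg hd.le (hαpos 0).le)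
      (by simpa using hrec_from 0) m
  have htail : B (m + (t - m)) ≤ β ^ (t - m) * B m + d * α m / (1 - β) :=
    le_pow_mul_add_div_one_sub (u := fun k ↦ B (m + k)) hβ0.le hβ1
      (mul_nonneg hd.le (hαpos m).le) (hrec_from m) (t - m)
  rw [Nat.add_sub_cancel' (Nat.div_le_self t 2)] at htail
  have hpow : β ^ (t - m) ≤ β ^ ((t : ℝ) / 2) := pow_sub_half_le_rpow_half hβ0 hβ1.le t
  have h1β : 0 < 1 - β := sub_pos.mpr hβ1
  have hscale : 0 ≤ d * α 0 / (1 - β) := by have := hαpos 0; positivity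
  calc B t ≤ β ^ (t - m) * (β ^ m * B 0 + d * α 0 / (1 - β)) + d * α m / (1 - β) :=
        htail.trans (by gcongr)
    _ = β ^ t * B 0 + β ^ (t - m) * (d * α 0 / (1 - β)) + d * α m / (1 - β) := by
        rw [mul_add, ← mul_assoc, ← pow_add, Nat.sub_add_cancel (Nat.div_le_self t 2)]
    _ ≤ β ^ t * B 0 + β ^ ((t : ℝ) / 2) * (d * α 0 / (1 - β)) + d * α m / (1 - β) := by
        gcongr
    _ = _ := by ring

theorem consensus_error_estimate
    (β d : ℝ) (hβ : β ∈ Set.Ioo (0 : ℝ) 1) (hd : 0 < d)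
    (α : ℕ → ℝ) (hαpos : ∀ t, 0 < α t) (hαmono : ∀ t, α (t + 1) ≤ α t)
    (B : ℕ → ℝ) (hB : ∀ t, 0 ≤ B t)
    (hrec : ∀ t, B (t + 1) ≤ β * B t + d * α t) :
    ∀ t : ℕ, 2 ≤ t →
      B t ≤ d / (1 - β) * α (t / 2) + β ^ t * B 0
        + β ^ ((t : ℝ) / 2) * d / (1 - β) * α 0 :=
  consensus_error_estimate_general β d hβ hd α hαpos hαmono B hrec
end

section
/- Consider decentralized gradient descent x_i(t+1) = ∑_j w_{ij}x_j(t) - α(t)∇f_i(x_i(t)) with doubly stochastic W, each f_i L-smooth, and total cost f = (1/m)∑f_i that is μ-strongly convex with minimizer x*. If α(t) ≤ 2/(μ+L), then the averages x̄(t) = (1/m)∑_i x_i(t) satisfy ‖x̄(t+1) - x*‖ ≤ (1 - ηα(t))‖x̄(t) - x*‖ + (Lα(t)/√m)·(∑_i ‖x_i(t) - x̄(t)‖²)^{1/2}, where η = μL/(μ+L). -/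
/-!
The average obeys `x̄(t+1) - x* = (x̄(t) - α ∇f(x̄(t)) - x*) - (α/m) ∑ᵢ (∇fᵢ(xᵢ(t)) - ∇fᵢ(x̄(t)))`.
The first term is an exact gradient step on `f`; it contracts by `1 - ηα` because of the
interpolation inequality `μL‖y - x‖² + ‖∇f y - ∇f x‖² ≤ (μ + L)⟪∇f y - ∇f x, y - x⟫`, which is
cocoercivity of the gradient of the convex, `(L - μ)`-smooth function `f - μ‖·‖²/2`. The second
term is bounded by the `L`-smoothness of each `fᵢ` and Cauchy–Schwarz. No differentiability is
assumed: the strong-convexity inequality together with the Lipschitz bound makes `f` differentiable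
with gradient `G`, which yields the descent lemma behind cocoercivity.
-/

open scoped RealInnerProductSpace

section SubgradientField

variable {E : Type*} [NormedAddCommGroup E] [InnerProductSpace ℝ E]

def IsStrongSubgradientField (μ : ℝ) (F : E → ℝ) (G : E → E) : Prop :=
  ∀ x y, F x + ⟪G x, y - x⟫ + μ / 2 * ‖y - x‖ ^ 2 ≤ F y

lemma half_norm_sq_sub_half_norm_sq (x y : E) :
    ‖y‖ ^ 2 / 2 - ‖x‖ ^ 2 / 2 = ⟪x, y - x⟫ + ‖y - x‖ ^ 2 / 2 := by
  rw [norm_sub_sq_real, inner_sub_right, real_inner_self_eq_norm_sq, real_inner_comm]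
  ring

lemma le_add_inner_add_half_mul_norm_sq_of_lipschitz {L : ℝ} {F : E → ℝ} {G : E → E}
    (hF : ∀ x, HasFDerivAt F (innerSL ℝ (G x)) x) (hG : ∀ x y, ‖G y - G x‖ ≤ L * ‖y - x‖)
    (x y : E) : F y ≤ F x + ⟪G x, y - x⟫ + L / 2 * ‖y - x‖ ^ 2 := by
  set v := y - x
  have hline : ∀ t : ℝ, HasDerivAt (fun t : ℝ => F (x + t • v)) ⟪G (x + t • v), v⟫ t := by
    intro t
    have hpath : HasDerivAt (fun t : ℝ => x + t • v) v t := by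
      simpa using ((hasDerivAt_id t).smul_const v).const_add x
    exact (hF _).comp_hasDerivAt t hpath
  have hbound : ∀ t : ℝ, HasDerivAt (fun t : ℝ => F x + t * ⟪G x, v⟫ + L / 2 * ‖v‖ ^ 2 * t ^ 2)
      (⟪G x, v⟫ + L * ‖v‖ ^ 2 * t) t := by
    intro t
    refine ((((hasDerivAt_id t).mul_const ⟪G x, v⟫).const_add (F x)).add
      ((hasDerivAt_pow 2 t).const_mul (L / 2 * ‖v‖ ^ 2))).congr_deriv ?_
    simp only [Nat.cast_ofNat]
    ring
  have hslope : ∀ t ∈ Set.Ico (0 : ℝ) 1, ⟪G (x + t • v), v⟫ ≤ ⟪G x, v⟫ + L * ‖v‖ ^ 2 * t := by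
    rintro t ⟨ht, -⟩
    have hlip : ‖G (x + t • v) - G x‖ ≤ L * (t * ‖v‖) := by
      simpa [norm_smul, abs_of_nonneg ht] using hG x (x + t • v)
    calc ⟪G (x + t • v), v⟫ = ⟪G x, v⟫ + ⟪G (x + t • v) - G x, v⟫ := by
          rw [inner_sub_left]; ring
      _ ≤ ⟪G x, v⟫ + ‖G (x + t • v) - G x‖ * ‖v‖ := by gcongr; exact real_inner_le_norm _ _
      _ ≤ ⟪G x, v⟫ + L * (t * ‖v‖) * ‖v‖ := by gcongr
      _ = ⟪G x, v⟫ + L * ‖v‖ ^ 2 * t := by ring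
  have := image_le_of_deriv_right_le_deriv_boundary
    (fun t _ => (hline t).continuousAt.continuousWithinAt)
    (fun t _ => (hline t).hasDerivWithinAt) (by simp)
    (fun t _ => (hbound t).continuousAt.continuousWithinAt)
    (fun t _ => (hbound t).hasDerivWithinAt) hslope (Set.right_mem_Icc.2 zero_le_one)
  simpa [v] using this

namespace IsStrongSubgradientField

variable {μ L : ℝ} {F : E → ℝ} {G : E → E}

lemma mono (hF : IsStrongSubgradientField μ F G) {ν : ℝ} (hν : ν ≤ μ) :
    IsStrongSubgradientField ν F G := fun x y => by
  have := hF x y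
  nlinarith [sq_nonneg ‖y - x‖]

lemma mul_norm_sq_le_inner (hF : IsStrongSubgradientField μ F G) (x y : E) :
    μ * ‖y - x‖ ^ 2 ≤ ⟪G y - G x, y - x⟫ := by
  have hxy := hF x y
  have hyx := hF y x
  rw [← neg_sub y x, inner_neg_right, norm_neg] at hyx
  rw [inner_sub_left]
  linarith

lemma le_add_inner_add_mul_norm_sq (hF : IsStrongSubgradientField 0 F G)
    (hG : ∀ x y, ‖G y - G x‖ ≤ L * ‖y - x‖) (x y : E) :
    F y ≤ F x + ⟪G x, y - x⟫ + L * ‖y - x‖ ^ 2 := by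
  have hyx := hF y x
  rw [← neg_sub y x, inner_neg_right, norm_neg] at hyx
  have hcs : ⟪G y - G x, y - x⟫ ≤ L * ‖y - x‖ ^ 2 :=
    calc ⟪G y - G x, y - x⟫ ≤ ‖G y - G x‖ * ‖y - x‖ := real_inner_le_norm _ _
      _ ≤ L * ‖y - x‖ * ‖y - x‖ := by gcongr; exact hG x y
      _ = L * ‖y - x‖ ^ 2 := by ring
  rw [inner_sub_left] at hcs
  linarith

lemma hasFDerivAt (hF : IsStrongSubgradientField 0 F G)
    (hG : ∀ x y, ‖G y - G x‖ ≤ L * ‖y - x‖) (x : E) :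
    HasFDerivAt F (innerSL ℝ (G x)) x := by
  rw [hasFDerivAt_iff_isLittleO_nhds_zero]
  refine Asymptotics.IsBigO.trans_isLittleO (g := fun h : E => ‖h‖ ^ 2) ?_
    (Asymptotics.isLittleO_norm_pow_id one_lt_two)
  refine Asymptotics.IsBigO.of_bound L (Filter.Eventually.of_forall fun h => ?_)
  have hlow := hF x (x + h)
  have hup := hF.le_add_inner_add_mul_norm_sq hG x (x + h)
  simp only [add_sub_cancel_left, innerSL_apply_apply] at hlow hup ⊢
  rw [Real.norm_eq_abs, Real.norm_eq_abs, abs_of_nonneg (by linarith),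
    abs_of_nonneg (by positivity)]
  linarith

lemma sub_half_mul_norm_sq (hF : IsStrongSubgradientField μ F G) (c : ℝ) :
    IsStrongSubgradientField (μ - c) (fun z => F z - c / 2 * ‖z‖ ^ 2) (fun z => G z - c • z) :=
  fun x y => by
    simp only [inner_sub_left, real_inner_smul_left]
    linear_combination hF x y + c * half_norm_sq_sub_half_norm_sq x y

lemma add_inner_add_norm_sq_div_le (hF : IsStrongSubgradientField 0 F G) {C : ℝ} (hC : 0 < C)
    (hup : ∀ x y, F y ≤ F x + ⟪G x, y - x⟫ + C / 2 * ‖y - x‖ ^ 2) (x y : E) :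
    F x + ⟪G x, y - x⟫ + ‖G y - G x‖ ^ 2 / (2 * C) ≤ F y := by
  -- compare both bounds at the point reached from `y` by a gradient step of length `1 / C`
  set w := G y - G x
  set z := y - C⁻¹ • w
  have hlow := hF x z
  have hhigh := hup y z
  have hzx : z - x = (y - x) - C⁻¹ • w := by simp only [z]; abel
  have hzy : z - y = -(C⁻¹ • w) := by simp only [z]; abel
  rw [hzx, inner_sub_right, real_inner_smul_right] at hlow
  rw [hzy, inner_neg_right, real_inner_smul_right, norm_neg, norm_smul, Real.norm_eq_abs,
    abs_of_pos (inv_pos.2 hC)] at hhigh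
  have hw : ⟪G y, w⟫ - ⟪G x, w⟫ = ‖w‖ ^ 2 := by
    rw [← inner_sub_left, real_inner_self_eq_norm_sq]
  have hCw : C / 2 * (C⁻¹ * ‖w‖) ^ 2 = C⁻¹ * ‖w‖ ^ 2 - ‖w‖ ^ 2 / (2 * C) := by
    field_simp; ring
  linear_combination hlow + hhigh - C⁻¹ * hw + hCw

lemma norm_sq_le_mul_inner (hF : IsStrongSubgradientField 0 F G) {C : ℝ} (hC : 0 < C)
    (hup : ∀ x y, F y ≤ F x + ⟪G x, y - x⟫ + C / 2 * ‖y - x‖ ^ 2) (x y : E) :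
    ‖G y - G x‖ ^ 2 ≤ C * ⟪G y - G x, y - x⟫ := by
  have hxy := hF.add_inner_add_norm_sq_div_le hC hup x y
  have hyx := hF.add_inner_add_norm_sq_div_le hC hup y x
  rw [← neg_sub y x, inner_neg_right, ← norm_neg (G x - G y), neg_sub] at hyx
  rw [inner_sub_left]
  have hsum : ‖G y - G x‖ ^ 2 / C ≤ ⟪G y, y - x⟫ - ⟪G x, y - x⟫ := by
    have : ‖G y - G x‖ ^ 2 / C = ‖G y - G x‖ ^ 2 / (2 * C) + ‖G y - G x‖ ^ 2 / (2 * C) := by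
      field_simp; ring
    linarith
  rwa [div_le_iff₀' hC] at hsum

lemma mul_norm_sq_add_norm_sq_le_inner (hF : IsStrongSubgradientField μ F G) (hμ : 0 ≤ μ)
    (hL : 0 ≤ L) (hG : ∀ x y, ‖G y - G x‖ ≤ L * ‖y - x‖) (x y : E) :
    μ * L * ‖y - x‖ ^ 2 + ‖G y - G x‖ ^ 2 ≤ (μ + L) * ⟪G y - G x, y - x⟫ := by
  have hmono := hF.mul_norm_sq_le_inner x y
  have hlip := hG x y
  have hcs : ⟪G y - G x, y - x⟫ ≤ ‖G y - G x‖ * ‖y - x‖ := real_inner_le_norm _ _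
  rcases le_or_gt L μ with hLμ | hμL
  · have hLp : L * ‖y - x‖ ^ 2 ≤ ⟪G y - G x, y - x⟫ := by nlinarith [sq_nonneg ‖y - x‖]
    have hsq : ‖G y - G x‖ ^ 2 ≤ (L * ‖y - x‖) ^ 2 := pow_le_pow_left₀ (norm_nonneg _) hlip 2
    nlinarith [mul_le_mul_of_nonneg_left hLp (add_nonneg hμ hL)]
  · -- `F - μ ‖·‖² / 2` is convex and `(L - μ)`-smooth; apply cocoercivity to it
    have hconv := (hF.sub_half_mul_norm_sq μ).mono (sub_self μ).ge
    have hdesc := le_add_inner_add_half_mul_norm_sq_of_lipschitz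
      ((hF.mono hμ).hasFDerivAt hG) hG
    have hsmooth : ∀ x y, F y - μ / 2 * ‖y‖ ^ 2 ≤ F x - μ / 2 * ‖x‖ ^ 2
        + ⟪G x - μ • x, y - x⟫ + (L - μ) / 2 * ‖y - x‖ ^ 2 := fun x y => by
      rw [inner_sub_left, real_inner_smul_left]
      linear_combination hdesc x y - μ * half_norm_sq_sub_half_norm_sq x y
    have hcoco := hconv.norm_sq_le_mul_inner (sub_pos.2 hμL) hsmooth x y
    have hdiff : G y - μ • y - (G x - μ • x) = (G y - G x) - μ • (y - x) := by
      rw [smul_sub]; abel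
    have hnorm : ‖(G y - G x) - μ • (y - x)‖ ^ 2
        = ‖G y - G x‖ ^ 2 - 2 * μ * ⟪G y - G x, y - x⟫ + μ ^ 2 * ‖y - x‖ ^ 2 := by
      rw [norm_sub_sq_real, real_inner_smul_right, norm_smul, Real.norm_eq_abs, abs_of_nonneg hμ]
      ring
    have hinner : ⟪(G y - G x) - μ • (y - x), y - x⟫
        = ⟪G y - G x, y - x⟫ - μ * ‖y - x‖ ^ 2 := by
      rw [inner_sub_left, real_inner_smul_left, real_inner_self_eq_norm_sq]
    rw [hdiff, hnorm, hinner] at hcoco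
    linear_combination hcoco

lemma norm_sub_smul_sub_le (hF : IsStrongSubgradientField μ F G) (hμ : 0 ≤ μ) (hL : 0 < L)
    (hG : ∀ x y, ‖G y - G x‖ ≤ L * ‖y - x‖) {xstar : E} (hxstar : G xstar = 0) {α : ℝ}
    (hα : 0 ≤ α) (hα2 : α ≤ 2 / (μ + L)) (x : E) :
    ‖x - α • G x - xstar‖ ≤ (1 - μ * L / (μ + L) * α) * ‖x - xstar‖ := by
  have hμL : 0 < μ + L := by linarith
  have hinterp := hF.mul_norm_sq_add_norm_sq_le_inner hμ hL.le hG xstar x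
  rw [hxstar, sub_zero] at hinterp
  have hrate : 0 ≤ 1 - μ * L / (μ + L) * α := by
    have : μ * L / (μ + L) * α ≤ μ * L / (μ + L) * (2 / (μ + L)) := by gcongr
    have : μ * L / (μ + L) * (2 / (μ + L)) ≤ 1 / 2 := by
      rw [div_mul_div_comm, div_le_div_iff₀ (by positivity) two_pos]
      nlinarith [sq_nonneg (μ - L)]
    linarith
  have hstep : ‖x - α • G x - xstar‖ ^ 2
      = ‖x - xstar‖ ^ 2 - 2 * α * ⟪G x, x - xstar⟫ + α ^ 2 * ‖G x‖ ^ 2 := by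
    rw [sub_right_comm, norm_sub_sq_real, real_inner_smul_right, norm_smul, Real.norm_eq_abs,
      abs_of_nonneg hα, real_inner_comm]
    ring
  have hcross : 2 * α / (μ + L) * (μ * L * ‖x - xstar‖ ^ 2 + ‖G x‖ ^ 2)
      ≤ 2 * α * ⟪G x, x - xstar⟫ := by
    calc _ ≤ 2 * α / (μ + L) * ((μ + L) * ⟪G x, x - xstar⟫) := by gcongr
      _ = 2 * α * ⟪G x, x - xstar⟫ := by field_simp
  have hαsq : α ^ 2 ≤ 2 * α / (μ + L) :=
    calc α ^ 2 = α * α := sq α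
      _ ≤ α * (2 / (μ + L)) := by gcongr
      _ = 2 * α / (μ + L) := by ring
  have hsq : ‖x - α • G x - xstar‖ ^ 2 ≤ ((1 - μ * L / (μ + L) * α) * ‖x - xstar‖) ^ 2 :=
    calc ‖x - α • G x - xstar‖ ^ 2
        ≤ (1 - 2 * (μ * L / (μ + L)) * α) * ‖x - xstar‖ ^ 2 := by
          rw [hstep]
          have : 2 * α / (μ + L) * (μ * L * ‖x - xstar‖ ^ 2)
              = 2 * (μ * L / (μ + L)) * α * ‖x - xstar‖ ^ 2 := by ring
          nlinarith [mul_le_mul_of_nonneg_right hαsq (sq_nonneg ‖G x‖)]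
      _ ≤ ((1 - μ * L / (μ + L) * α) * ‖x - xstar‖) ^ 2 := by
          nlinarith [mul_nonneg (sq_nonneg (μ * L / (μ + L) * α)) (sq_nonneg ‖x - xstar‖)]
  exact (pow_le_pow_iff_left₀ (norm_nonneg _) (mul_nonneg hrate (norm_nonneg _)) two_ne_zero).1 hsq

end IsStrongSubgradientField

end SubgradientField

section Averaging

variable {ι E : Type*} [Fintype ι] [NormedAddCommGroup E] {L : ℝ} {g : ι → E → E}

lemma norm_average_sub_le [NormedSpace ℝ E] (hL : 0 ≤ L)
    (hg : ∀ i x y, ‖g i y - g i x‖ ≤ L * ‖y - x‖) (x y : E) :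
    ‖(Fintype.card ι : ℝ)⁻¹ • ∑ i, g i y - (Fintype.card ι : ℝ)⁻¹ • ∑ i, g i x‖
      ≤ L * ‖y - x‖ := by
  rw [← smul_sub, ← Finset.sum_sub_distrib, norm_smul, norm_inv, Real.norm_natCast]
  calc (Fintype.card ι : ℝ)⁻¹ * ‖∑ i, (g i y - g i x)‖
      ≤ (Fintype.card ι : ℝ)⁻¹ * ∑ _i : ι, L * ‖y - x‖ := by
        gcongr
        exact (norm_sum_le _ _).trans (Finset.sum_le_sum fun i _ => hg i x y)
    _ = ((Fintype.card ι : ℝ)⁻¹ * Fintype.card ι) * (L * ‖y - x‖) := by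
        rw [Finset.sum_const, Finset.card_univ, nsmul_eq_mul, mul_assoc]
    _ ≤ L * ‖y - x‖ := mul_le_of_le_one_left (by positivity) inv_mul_le_one

lemma norm_sum_sub_le_mul_sqrt (hL : 0 ≤ L) (hg : ∀ i x y, ‖g i y - g i x‖ ≤ L * ‖y - x‖)
    (p : ι → E) (z : E) :
    ‖∑ i, (g i (p i) - g i z)‖ ≤ L * (√(Fintype.card ι) * √(∑ i, ‖p i - z‖ ^ 2)) := by
  have hcs : ∑ i, ‖p i - z‖ ≤ √(Fintype.card ι) * √(∑ i, ‖p i - z‖ ^ 2) := by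
    simpa using Real.sum_mul_le_sqrt_mul_sqrt Finset.univ (fun _ => 1) (fun i => ‖p i - z‖)
  calc ‖∑ i, (g i (p i) - g i z)‖ ≤ ∑ i, L * ‖p i - z‖ :=
        (norm_sum_le _ _).trans (Finset.sum_le_sum fun i _ => hg i z (p i))
    _ ≤ L * (√(Fintype.card ι) * √(∑ i, ‖p i - z‖ ^ 2)) := by
        rw [← Finset.mul_sum]; gcongr

end Averaging

theorem dgd_average_estimate_general
    (m d : ℕ) (μ L : ℝ) (hμ : 0 < μ) (hL : 0 < L)
    (f : Fin m → EuclideanSpace ℝ (Fin d) → ℝ)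
    (g : Fin m → EuclideanSpace ℝ (Fin d) → EuclideanSpace ℝ (Fin d))
    (hsmooth : ∀ i x y, ‖g i y - g i x‖ ≤ L * ‖y - x‖)
    (G : EuclideanSpace ℝ (Fin d) → EuclideanSpace ℝ (Fin d))
    (hG : ∀ z, G z = (m : ℝ)⁻¹ • ∑ i, g i z)
    (hsc : ∀ x y, (m : ℝ)⁻¹ * ∑ i, f i y ≥
      (m : ℝ)⁻¹ * ∑ i, f i x + (inner ℝ (G x) (y - x) : ℝ) + μ / 2 * ‖y - x‖^2)
    (xstar : EuclideanSpace ℝ (Fin d))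
    (hG0 : G xstar = 0)
    (α : ℕ → ℝ) (hα : ∀ t, 0 < α t) (hα2 : ∀ t, α t ≤ 2 / (μ + L))
    (x : ℕ → Fin m → EuclideanSpace ℝ (Fin d))
    (xbar : ℕ → EuclideanSpace ℝ (Fin d))
    (hrec : ∀ t, xbar (t + 1) = xbar t - (α t / m) • ∑ i, g i (x t i)) :
    ∀ t, ‖xbar (t + 1) - xstar‖ ≤
      (1 - (μ * L / (μ + L)) * α t) * ‖xbar t - xstar‖
        + L * α t / Real.sqrt m * Real.sqrt (∑ i, ‖x t i - xbar t‖^2) := by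
  intro t
  have hGlip : ∀ a b, ‖G b - G a‖ ≤ L * ‖b - a‖ := fun a b => by
    simpa [hG] using norm_average_sub_le hL.le hsmooth a b
  have hF : IsStrongSubgradientField μ (fun z => (m : ℝ)⁻¹ * ∑ i, f i z) G := hsc
  have hstep := hF.norm_sub_smul_sub_le hμ.le hL hGlip hG0 (hα t).le (hα2 t) (xbar t)
  have hconsensus := norm_sum_sub_le_mul_sqrt hL.le hsmooth (x t) (xbar t)
  rw [Fintype.card_fin] at hconsensus
  have hαm : 0 ≤ α t / m := div_nonneg (hα t).le m.cast_nonneg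
  have hsplit : xbar (t + 1) - xstar = (xbar t - α t • G (xbar t) - xstar)
      - (α t / m) • ∑ i, (g i (x t i) - g i (xbar t)) := by
    rw [hrec, hG, Finset.sum_sub_distrib, div_eq_mul_inv]
    module
  calc ‖xbar (t + 1) - xstar‖
      ≤ ‖xbar t - α t • G (xbar t) - xstar‖
        + α t / m * ‖∑ i, (g i (x t i) - g i (xbar t))‖ := by
        rw [hsplit, ← norm_smul_of_nonneg hαm]
        exact norm_sub_le _ _
    _ ≤ (1 - μ * L / (μ + L) * α t) * ‖xbar t - xstar‖
        + α t / m * (L * (√m * √(∑ i, ‖x t i - xbar t‖ ^ 2))) := by gcongr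
    _ = (1 - μ * L / (μ + L) * α t) * ‖xbar t - xstar‖
        + L * α t / √m * √(∑ i, ‖x t i - xbar t‖ ^ 2) := by
        rw [div_eq_mul_one_div (L * α t), ← Real.sqrt_div_self']
        ring

theorem dgd_average_estimate
    (m d : ℕ) (hm : 0 < m) (μ L : ℝ) (hμ : 0 < μ) (hL : 0 < L)
    (f : Fin m → EuclideanSpace ℝ (Fin d) → ℝ)
    (g : Fin m → EuclideanSpace ℝ (Fin d) → EuclideanSpace ℝ (Fin d))
    (hsmooth : ∀ i x y, ‖g i y - g i x‖ ≤ L * ‖y - x‖)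
    (G : EuclideanSpace ℝ (Fin d) → EuclideanSpace ℝ (Fin d))
    (hG : ∀ z, G z = (m : ℝ)⁻¹ • ∑ i, g i z)
    (hsc : ∀ x y, (m : ℝ)⁻¹ * ∑ i, f i y ≥
      (m : ℝ)⁻¹ * ∑ i, f i x + (inner ℝ (G x) (y - x) : ℝ) + μ / 2 * ‖y - x‖^2)
    (xstar : EuclideanSpace ℝ (Fin d))
    (hmin : ∀ y, (m : ℝ)⁻¹ * ∑ i, f i xstar ≤ (m : ℝ)⁻¹ * ∑ i, f i y)
    (hG0 : G xstar = 0)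
    (α : ℕ → ℝ) (hα : ∀ t, 0 < α t) (hα2 : ∀ t, α t ≤ 2 / (μ + L))
    (x : ℕ → Fin m → EuclideanSpace ℝ (Fin d))
    (xbar : ℕ → EuclideanSpace ℝ (Fin d))
    (hxbar : ∀ t, xbar t = (m : ℝ)⁻¹ • ∑ i, x t i)
    (hrec : ∀ t, xbar (t + 1) = xbar t - (α t / m) • ∑ i, g i (x t i)) :
    ∀ t, ‖xbar (t + 1) - xstar‖ ≤
      (1 - (μ * L / (μ + L)) * α t) * ‖xbar t - xstar‖
        + L * α t / Real.sqrt m * Real.sqrt (∑ i, ‖x t i - xbar t‖^2) :=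
  dgd_average_estimate_general m d μ L hμ hL f g hsmooth G hG hsc xstar hG0 α hα hα2 x xbar hrec
end

section
/- Consider decentralized gradient descent 𝐱(t+1) = W𝐱(t) - α(t)∇f(𝐱(t)) with W doubly stochastic, β the spectral norm of W - (1/m)𝟙𝟙ᵀ, and each f_i L-smooth. With D = max_i ‖∇f_i(x*)‖ and block norms as above, the consensus error satisfies ‖𝐱(t+1) - 𝐱̄(t+1)‖ ≤ (β + Lα(t))‖𝐱(t) - 𝐱̄(t)‖ + Lα(t)‖𝐱̄(t) - 𝐱*‖ + √m·D·α(t), where 𝐱̄(t) stacks m copies of x̄(t) and 𝐱* stacks m copies of x*. -/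
/-!
Stack the agents' states in `ℓ²(Fin m; ℝᵈ)` and let `J` be the averaging matrix. Since `W` has
unit column sums, averaging commutes with the mixing step, so `x̄(t+1) = x̄(t) - α(t) Ḡ`, where
`G = (∇fᵢ(xᵢ(t)))ᵢ`; since `W` has unit row sums, `(W - J)` kills the consensus part, hence
`x(t+1) - x̄(t+1) = (W - J)(x(t) - x̄(t)) - α(t)(G - Ḡ)`.
The first term is bounded by `β ‖x(t) - x̄(t)‖`, because `W - J` acts blockwise as `(W - J) ⊗ I`;
centring is an orthogonal projection, so `‖G - Ḡ‖ ≤ ‖G‖`; and by smoothness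
`‖G‖ ≤ L ‖x(t) - x*‖ + √m D ≤ L (‖x(t) - x̄(t)‖ + √m ‖x̄(t) - x*‖) + √m D`.
-/

open Finset WithLp Matrix

section Mean

variable {ι E : Type*} [Fintype ι] [AddCommGroup E] [Module ℝ E]

noncomputable def mean (v : ι → E) : E := (Fintype.card ι : ℝ)⁻¹ • ∑ i, v i

lemma sum_eq_card_smul_mean (v : ι → E) : ∑ i, v i = (Fintype.card ι : ℝ) • mean v := by
  rcases isEmpty_or_nonempty ι with hι | hι
  · simp
  · rw [mean, smul_inv_smul₀ (by positivity)]

lemma mean_const [Nonempty ι] (c : E) : mean (fun _ : ι => c) = c := by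
  rw [mean, sum_const, card_univ, ← Nat.cast_smul_eq_nsmul ℝ, inv_smul_smul₀ (by positivity)]

lemma mean_sub_smul (a : ℝ) (v w : ι → E) :
    mean (fun i => v i - a • w i) = mean v - a • mean w := by
  simp only [mean, sum_sub_distrib, ← smul_sum, smul_sub, smul_comm a]

lemma mean_matrix_smul (W : Matrix ι ι ℝ) (hcol : ∀ j, ∑ i, W i j = 1) (v : ι → E) :
    mean (fun i => ∑ j, W i j • v j) = mean v := by
  simp only [mean]
  rw [sum_comm]
  simp only [← sum_smul, hcol, one_smul]

lemma sum_sub_averaging_smul_sub_mean (W : Matrix ι ι ℝ) (hrow : ∀ i, ∑ j, W i j = 1)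
    (v : ι → E) (i : ι) :
    ∑ j, (W - of fun _ _ => (Fintype.card ι : ℝ)⁻¹ : Matrix ι ι ℝ) i j • (v j - mean v) =
      ∑ j, W i j • v j - mean v := by
  rcases isEmpty_or_nonempty ι with hι | hι
  · simp [mean]
  · have hconst : ∑ _j : ι, (Fintype.card ι : ℝ)⁻¹ • mean v = mean v := by
      rw [← smul_sum, ← mean, mean_const]
    simp only [Matrix.sub_apply, of_apply, sub_smul, smul_sub, sum_sub_distrib, ← sum_smul,
      hrow, one_smul, hconst]
    rw [← smul_sum, ← mean]
    abel

lemma dgd_step_sub_mean (W : Matrix ι ι ℝ) (hrow : ∀ i, ∑ j, W i j = 1)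
    (hcol : ∀ j, ∑ i, W i j = 1) (a : ℝ) (v G : ι → E) (i : ι) :
    (∑ j, W i j • v j - a • G i) - mean (fun i => ∑ j, W i j • v j - a • G i) =
      ∑ j, (W - of fun _ _ => (Fintype.card ι : ℝ)⁻¹ : Matrix ι ι ℝ) i j • (v j - mean v) -
        a • (G i - mean G) := by
  rw [mean_sub_smul, mean_matrix_smul W hcol, sum_sub_averaging_smul_sub_mean W hrow, smul_sub]
  abel

end Mean

section StackedNorm

variable {ι E : Type*} [Fintype ι] [NormedAddCommGroup E]

lemma norm_toLp_eq_sqrt (v : ι → E) : ‖toLp 2 v‖ = √(∑ i, ‖v i‖ ^ 2) :=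
  PiLp.norm_eq_of_L2 _

lemma norm_toLp_const (c : E) :
    ‖toLp 2 (fun _ : ι => c)‖ = √(Fintype.card ι) * ‖c‖ := by
  rw [norm_toLp_eq_sqrt, sum_const, card_univ, nsmul_eq_mul, Real.sqrt_mul (by positivity),
    Real.sqrt_sq (norm_nonneg c)]

lemma norm_toLp_le_of_forall_norm_le {v : ι → E} {D : ℝ} (hD : 0 ≤ D) (hv : ∀ i, ‖v i‖ ≤ D) :
    ‖toLp 2 v‖ ≤ √(Fintype.card ι) * D := by
  calc ‖toLp 2 v‖ ≤ ‖toLp 2 (fun _ : ι => D)‖ := by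
        rw [norm_toLp_eq_sqrt, norm_toLp_eq_sqrt]
        gcongr with i
        rw [Real.norm_of_nonneg hD]
        exact hv i
    _ = √(Fintype.card ι) * D := by rw [norm_toLp_const, Real.norm_of_nonneg hD]

lemma norm_toLp_comp_sub_le {F : Type*} [NormedAddCommGroup F] {g : ι → E → F} {L : ℝ}
    (hL : 0 ≤ L) (hg : ∀ i x y, ‖g i y - g i x‖ ≤ L * ‖y - x‖) (v w : ι → E) :
    ‖toLp 2 (fun i => g i (v i) - g i (w i))‖ ≤ L * ‖toLp 2 (fun i => v i - w i)‖ := by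
  rw [norm_toLp_eq_sqrt, norm_toLp_eq_sqrt, ← Real.sqrt_sq hL, ← Real.sqrt_mul (sq_nonneg L),
    mul_sum]
  gcongr with i
  rw [← mul_pow]
  exact pow_le_pow_left₀ (norm_nonneg _) (hg i (w i) (v i)) 2

lemma norm_toLp_comp_le {F : Type*} [NormedAddCommGroup F] {g : ι → E → F} {L D : ℝ}
    (hL : 0 ≤ L) (hD : 0 ≤ D) (hg : ∀ i x y, ‖g i y - g i x‖ ≤ L * ‖y - x‖) {z : E}
    (hgz : ∀ i, ‖g i z‖ ≤ D) (v : ι → E) :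
    ‖toLp 2 (fun i => g i (v i))‖ ≤ L * ‖toLp 2 (fun i => v i - z)‖ + √(Fintype.card ι) * D := by
  calc ‖toLp 2 (fun i => g i (v i))‖
      = ‖toLp 2 (fun i => g i (v i) - g i z) + toLp 2 (fun i => g i z)‖ := by
        rw [← toLp_add]
        congr 2
        funext i
        exact (sub_add_cancel _ _).symm
    _ ≤ _ := (norm_add_le _ _).trans <|
        add_le_add (norm_toLp_comp_sub_le hL hg v fun _ => z)
          (norm_toLp_le_of_forall_norm_le hD hgz)

lemma norm_toLp_sub_le_norm_toLp_sub_mean_add [NormedSpace ℝ E] (v : ι → E) (z : E) :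
    ‖toLp 2 (fun i => v i - z)‖ ≤
      ‖toLp 2 (fun i => v i - mean v)‖ + √(Fintype.card ι) * ‖mean v - z‖ := by
  rw [← norm_toLp_const]
  have hsplit : toLp 2 (fun i => v i - z) =
      toLp 2 (fun i => v i - mean v) + toLp 2 (fun _ : ι => mean v - z) := by
    rw [← toLp_add]
    congr 1
    funext i
    simp only [Pi.add_apply, sub_add_sub_cancel]
  rw [hsplit]
  exact norm_add_le _ _

lemma norm_toLp_sub_mean_le [InnerProductSpace ℝ E] (v : ι → E) :
    ‖toLp 2 (fun i => v i - mean v)‖ ≤ ‖toLp 2 v‖ := by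
  rw [norm_toLp_eq_sqrt, norm_toLp_eq_sqrt]
  apply Real.sqrt_le_sqrt
  have hpythagoras : ∑ i, ‖v i - mean v‖ ^ 2 =
      ∑ i, ‖v i‖ ^ 2 - Fintype.card ι * ‖mean v‖ ^ 2 := by
    simp_rw [norm_sub_sq_real, sum_add_distrib, sum_sub_distrib, ← mul_sum, ← sum_inner,
      sum_eq_card_smul_mean v, real_inner_smul_left, real_inner_self_eq_norm_sq]
    simp only [sum_const, card_univ, nsmul_eq_mul]
    ring
  have : 0 ≤ (Fintype.card ι : ℝ) * ‖mean v‖ ^ 2 := by positivity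
  linarith

end StackedNorm

section MatrixAction

variable {ι ι' κ : Type*} [Fintype ι] [Fintype ι'] [DecidableEq ι'] [Fintype κ]

lemma sum_sq_mulVec_le (A : Matrix ι ι' ℝ) (w : ι' → ℝ) :
    ∑ i, (A *ᵥ w) i ^ 2 ≤
      ‖LinearMap.toContinuousLinearMap (toEuclideanLin A)‖ ^ 2 * ∑ j, w j ^ 2 := by
  have h := (LinearMap.toContinuousLinearMap (toEuclideanLin A)).le_opNorm (toLp 2 w)
  have h2 := pow_le_pow_left₀ (norm_nonneg _) h 2
  rw [mul_pow, EuclideanSpace.real_norm_sq_eq, EuclideanSpace.real_norm_sq_eq] at h2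
  simpa using h2

lemma norm_toLp_matrix_smul_le (A : Matrix ι ι' ℝ) (v : ι' → EuclideanSpace ℝ κ) :
    ‖toLp 2 (fun i => ∑ j, A i j • v j)‖ ≤
      ‖LinearMap.toContinuousLinearMap (toEuclideanLin A)‖ * ‖toLp 2 v‖ := by
  set β := ‖LinearMap.toContinuousLinearMap (toEuclideanLin A)‖
  rw [← pow_le_pow_iff_left₀ (norm_nonneg _) (by positivity) two_ne_zero, mul_pow,
    PiLp.norm_sq_eq_of_L2, PiLp.norm_sq_eq_of_L2]
  simp only [EuclideanSpace.real_norm_sq_eq]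
  calc ∑ i, ∑ k, (∑ j, A i j • v j) k ^ 2
      = ∑ k, ∑ i, (A *ᵥ fun j => v j k) i ^ 2 := by
        rw [sum_comm]
        simp [mulVec, dotProduct]
    _ ≤ ∑ k, β ^ 2 * ∑ j, v j k ^ 2 := sum_le_sum fun k _ => sum_sq_mulVec_le A _
    _ = β ^ 2 * ∑ j, ∑ k, v j k ^ 2 := by rw [← mul_sum, sum_comm]

end MatrixAction

lemma norm_dgd_step_sub_mean_le {ι κ : Type*} [Fintype ι] [DecidableEq ι] [Fintype κ]
    (W : Matrix ι ι ℝ) (hrow : ∀ i, ∑ j, W i j = 1) (hcol : ∀ j, ∑ i, W i j = 1)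
    {a : ℝ} (ha : 0 ≤ a) (v G : ι → EuclideanSpace ℝ κ) :
    ‖toLp 2 (fun i => (∑ j, W i j • v j - a • G i) -
        mean (fun i => ∑ j, W i j • v j - a • G i))‖ ≤
      ‖LinearMap.toContinuousLinearMap
          (toEuclideanLin (W - of fun _ _ => (Fintype.card ι : ℝ)⁻¹))‖ *
        ‖toLp 2 (fun i => v i - mean v)‖ + a * ‖toLp 2 G‖ := by
  simp_rw [dgd_step_sub_mean W hrow hcol]
  calc _ ≤ ‖toLp 2 (fun i =>
          ∑ j, (W - of fun _ _ => (Fintype.card ι : ℝ)⁻¹ : Matrix ι ι ℝ) i j • (v j - mean v))‖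
        + ‖a • toLp 2 (fun i => G i - mean G)‖ := norm_sub_le _ _
    _ ≤ _ := by
      rw [norm_smul, Real.norm_of_nonneg ha]
      gcongr
      · exact norm_toLp_matrix_smul_le _ _
      · exact norm_toLp_sub_mean_le G

theorem dgd_consensus_estimate_general
    (m d : ℕ) (L D : ℝ) (hL : 0 < L) (hD : 0 ≤ D)
    (W : Matrix (Fin m) (Fin m) ℝ)
    (hrow : ∀ i, ∑ j, W i j = 1) (hcol : ∀ j, ∑ i, W i j = 1)
    (β : ℝ)
    (hβ : β = ‖LinearMap.toContinuousLinearMap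
      (Matrix.toEuclideanLin (W - Matrix.of (fun _ _ => (m : ℝ)⁻¹)))‖)
    (g : Fin m → EuclideanSpace ℝ (Fin d) → EuclideanSpace ℝ (Fin d))
    (hsmooth : ∀ i x y, ‖g i y - g i x‖ ≤ L * ‖y - x‖)
    (xstar : EuclideanSpace ℝ (Fin d))
    (hDbound : ∀ i, ‖g i xstar‖ ≤ D)
    (α : ℕ → ℝ) (hα : ∀ t, 0 < α t)
    (x : ℕ → Fin m → EuclideanSpace ℝ (Fin d))
    (hrec : ∀ t i, x (t + 1) i = (∑ j, W i j • x t j) - α t • g i (x t i))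
    (xbar : ℕ → EuclideanSpace ℝ (Fin d))
    (hxbar : ∀ t, xbar t = (m : ℝ)⁻¹ • ∑ i, x t i) :
    ∀ t, Real.sqrt (∑ i, ‖x (t + 1) i - xbar (t + 1)‖^2) ≤
      (β + L * α t) * Real.sqrt (∑ i, ‖x t i - xbar t‖^2)
        + L * α t * (Real.sqrt m * ‖xbar t - xstar‖)
        + Real.sqrt m * D * α t := by
  intro t
  have hxbar_mean : ∀ s, xbar s = mean (x s) := by simp [hxbar, mean]
  have hstep := norm_dgd_step_sub_mean_le W hrow hcol (hα t).le (x t) fun i => g i (x t i)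
  have hgrad := norm_toLp_comp_le hL.le hD hsmooth hDbound (x t)
  have hsplit := norm_toLp_sub_le_norm_toLp_sub_mean_add (x t) xstar
  simp only [Fintype.card_fin, ← hβ, ← hxbar_mean] at hstep hgrad hsplit
  simp only [← norm_toLp_eq_sqrt, hxbar_mean (t + 1), funext (hrec t)]
  set S := ‖toLp 2 fun i => x t i - xbar t‖
  have hgrad' : ‖toLp 2 fun i => g i (x t i)‖ ≤ L * (S + √m * ‖xbar t - xstar‖) + √m * D := by
    linarith [mul_le_mul_of_nonneg_left hsplit hL.le]
  calc _ ≤ β * S + α t * ‖toLp 2 fun i => g i (x t i)‖ := hstep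
    _ ≤ β * S + α t * (L * (S + √m * ‖xbar t - xstar‖) + √m * D) := by
      gcongr
      exact (hα t).le
    _ = _ := by ring

theorem dgd_consensus_estimate
    (m d : ℕ) (hm : 0 < m) (L D : ℝ) (hL : 0 < L) (hD : 0 ≤ D)
    (W : Matrix (Fin m) (Fin m) ℝ)
    (hnonneg : ∀ i j, 0 ≤ W i j)
    (hrow : ∀ i, ∑ j, W i j = 1) (hcol : ∀ j, ∑ i, W i j = 1)
    (β : ℝ)
    (hβ : β = ‖LinearMap.toContinuousLinearMap
      (Matrix.toEuclideanLin (W - Matrix.of (fun _ _ => (m : ℝ)⁻¹)))‖)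
    (hβ1 : β < 1)
    (g : Fin m → EuclideanSpace ℝ (Fin d) → EuclideanSpace ℝ (Fin d))
    (hsmooth : ∀ i x y, ‖g i y - g i x‖ ≤ L * ‖y - x‖)
    (xstar : EuclideanSpace ℝ (Fin d))
    (hDbound : ∀ i, ‖g i xstar‖ ≤ D)
    (α : ℕ → ℝ) (hα : ∀ t, 0 < α t)
    (x : ℕ → Fin m → EuclideanSpace ℝ (Fin d))
    (hrec : ∀ t i, x (t + 1) i = (∑ j, W i j • x t j) - α t • g i (x t i))
    (xbar : ℕ → EuclideanSpace ℝ (Fin d))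
    (hxbar : ∀ t, xbar t = (m : ℝ)⁻¹ • ∑ i, x t i) :
    ∀ t, Real.sqrt (∑ i, ‖x (t + 1) i - xbar (t + 1)‖^2) ≤
      (β + L * α t) * Real.sqrt (∑ i, ‖x t i - xbar t‖^2)
        + L * α t * (Real.sqrt m * ‖xbar t - xstar‖)
        + Real.sqrt m * D * α t :=
  dgd_consensus_estimate_general m d L D hL hD W hrow hcol β hβ g hsmooth xstar hDbound α hα x hrec
    xbar hxbar
end
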